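/- arXiv:2512.10125 — 9 statements merged into one kernel-verified Lean document; each statement's English description precedes it below -/
import Mathlib

section
/- Consider the voting game with 2N+1 voters (N ≥ 1 an integer). For a type-symmetric strategy pair σ = (σ^A, σ^B) ∈ [0,1]², define the pivotal probabilities φ_A(σ) = C(2N,N)·[q_A σ^A + (1−q_A)(1−σ^B)]^N·[q_A(1−σ^A) + (1−q_A)σ^B]^N and φ_B(σ) = C(2N,N)·[q_B σ^B + (1−q_B)(1−σ^A)]^N·[q_B(1−σ^B) + (1−q_B)σ^A]^N, and the thresholds t_low = (1−w)(1−q_B)/(q_A + w(1−q_B)) and t_high = (q_B + w(1−q_A))/((1−w)(1−q_A)). Call σ an equilibrium if φ_A(σ) + φ_B(σ) > 0 and the following best-response conditions hold: σ^A = 1 implies φ_A ≥ t_low·φ_B, σ^A = 0 implies φ_A ≤ t_low·φ_B, σ^A ∈ (0,1) implies φ_A = t_low·φ_B; and σ^B = 1 implies φ_A ≤ t_high·φ_B, σ^B = 0 implies φ_A ≥ t_high·φ_B, σ^B ∈ (0,1) implies φ_A = t_high·φ_B. Then: (i) if q_A = q_B, for every N the unique equilibrium is (σ^A, σ^B) =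 (1,1); (ii) if q_A > q_B, the unique equilibrium is (1,1) when N < N*(w), and (σ*_N(w), 1) when N ≥ N*(w). -/
/-- Pivotal probability conditional on state `A`, given `2N+1` voters and
type-symmetric strategy `σ = (σ^A, σ^B)`. -/
noncomputable def phiA (N : ℕ) (qA : ℝ) (σ : ℝ × ℝ) : ℝ :=
  (Nat.choose (2 * N) N : ℝ) * (qA * σ.1 + (1 - qA) * (1 - σ.2)) ^ N *
    (qA * (1 - σ.1) + (1 - qA) * σ.2) ^ N

/-- Pivotal probability conditional on state `B`. -/
noncomputable def phiB (N : ℕ) (qB : ℝ) (σ : ℝ × ℝ) : ℝ :=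
  (Nat.choose (2 * N) N : ℝ) * (qB * σ.2 + (1 - qB) * (1 - σ.1)) ^ N *
    (qB * (1 - σ.2) + (1 - qB) * σ.1) ^ N

/-- Lower likelihood-ratio threshold `t_low = ψ(w)`. -/
noncomputable def tLow (qA qB w : ℝ) : ℝ := (1 - w) * (1 - qB) / (qA + w * (1 - qB))

/-- Upper likelihood-ratio threshold `t_high`. -/
noncomputable def tHigh (qA qB w : ℝ) : ℝ := (qB + w * (1 - qA)) / ((1 - w) * (1 - qA))

/-- Type-symmetric responsive equilibrium of the voting game with motivated voters. -/
def IsEquilibrium (N : ℕ) (qA qB w : ℝ) (σ : ℝ × ℝ) : Prop :=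
  σ.1 ∈ Set.Icc (0 : ℝ) 1 ∧ σ.2 ∈ Set.Icc (0 : ℝ) 1 ∧
  0 < phiA N qA σ + phiB N qB σ ∧
  (σ.1 = 1 → tLow qA qB w * phiB N qB σ ≤ phiA N qA σ) ∧
  (σ.1 = 0 → phiA N qA σ ≤ tLow qA qB w * phiB N qB σ) ∧
  (0 < σ.1 → σ.1 < 1 → phiA N qA σ = tLow qA qB w * phiB N qB σ) ∧
  (σ.2 = 1 → phiA N qA σ ≤ tHigh qA qB w * phiB N qB σ) ∧
  (σ.2 = 0 → tHigh qA qB w * phiB N qB σ ≤ phiA N qA σ) ∧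
  (0 < σ.2 → σ.2 < 1 → phiA N qA σ = tHigh qA qB w * phiB N qB σ)

/-- `ψ(w) = (1−w)(1−q_B)/(q_A + w(1−q_B))`. -/
noncomputable def psi (qA qB w : ℝ) : ℝ := (1 - w) * (1 - qB) / (qA + w * (1 - qB))

/-- `N*(w) = ⌈ log ψ(w) / log (q_A(1−q_A)/(q_B(1−q_B))) ⌉`. -/
noncomputable def Nstar (qA qB w : ℝ) : ℤ :=
  ⌈Real.log (psi qA qB w) / Real.log (qA * (1 - qA) / (qB * (1 - qB)))⌉

/-- Equilibrium mixing probability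
`σ*_N(w) = (q_A − ψ(w)^{1/N}(1−q_B)) / (q_A² − ψ(w)^{1/N}(1−q_B)²)`. -/
noncomputable def sigmaStar (N : ℕ) (qA qB w : ℝ) : ℝ :=
  (qA - psi qA qB w ^ ((1 : ℝ) / N) * (1 - qB)) /
    (qA ^ 2 - psi qA qB w ^ ((1 : ℝ) / N) * (1 - qB) ^ 2)

/-!
Writing `p` for the probability that a single voter votes for `A`, each pivotal probability is the
binomial tie probability `C(2N,N) (p(1-p))^N`. Because `t_low < 1 < t_high`, `B`-signal voters
are sincere: if `σ^B < 1` and `σ^A < 1` the incentive conditions force `φ_A = φ_B = 0`, and if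
`σ^A = 1` then `φ_A ≤ φ_B < t_high φ_B` rules out mixing, while `σ = (1, 0)` has no ties at all.
Hence `σ^B = 1`, and then `σ^A > 0`. On the slice `σ^B = 1`, with `x = t_low^{1/N}`, the sign of
`φ_A − t_low φ_B` is that of the decreasing affine function `n − σ^A d`, where
`n = q_A − x(1−q_B)` and `d = q_A² − x(1−q_B)²`. So the equilibrium is sincere when
`n − d = q_A(1−q_A) − x q_B(1−q_B)` is positive, and is the root `σ*_N(w) = n / d` otherwise;
taking logarithms, `n > d` means exactly `N < N*(w)`.
-/

noncomputable def tieProb (N : ℕ) (p : ℝ) : ℝ :=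
  (Nat.choose (2 * N) N : ℝ) * (p * (1 - p)) ^ N

section tieProb

variable {N : ℕ}

lemma tieProb_zero (hN : N ≠ 0) : tieProb N 0 = 0 := by
  simp [tieProb, hN]

lemma tieProb_one_sub (p : ℝ) : tieProb N (1 - p) = tieProb N p := by
  rw [tieProb, tieProb, sub_sub_cancel, mul_comm p]

lemma mul_one_sub_nonneg {p : ℝ} (h0 : 0 ≤ p) (h1 : p ≤ 1) : 0 ≤ p * (1 - p) :=
  mul_nonneg h0 (sub_nonneg.2 h1)

lemma tieProb_nonneg {p : ℝ} (h0 : 0 ≤ p) (h1 : p ≤ 1) : 0 ≤ tieProb N p := by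
  have := mul_one_sub_nonneg h0 h1
  unfold tieProb
  positivity

lemma tieProb_pos {p : ℝ} (h0 : 0 < p) (h1 : p < 1) : 0 < tieProb N p := by
  have : 0 < p * (1 - p) := mul_pos h0 (sub_pos.2 h1)
  have : (0 : ℝ) < Nat.choose (2 * N) N := by exact_mod_cast Nat.choose_pos (by omega)
  unfold tieProb
  positivity

lemma tieProb_le_tieProb {s u : ℝ} (hs : 0 ≤ s * (1 - s)) (h : s * (1 - s) ≤ u * (1 - u)) :
    tieProb N s ≤ tieProb N u := by
  unfold tieProb
  gcongr

lemma pow_mul_tieProb (x s : ℝ) :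
    x ^ N * tieProb N s = (Nat.choose (2 * N) N : ℝ) * (x * (s * (1 - s))) ^ N := by
  rw [tieProb, mul_left_comm, ← mul_pow]

lemma pow_mul_tieProb_le_tieProb_iff (hN : N ≠ 0) {x s u : ℝ} (hx : 0 ≤ x)
    (hs : 0 ≤ s * (1 - s)) (hu : 0 ≤ u * (1 - u)) :
    x ^ N * tieProb N s ≤ tieProb N u ↔ x * (s * (1 - s)) ≤ u * (1 - u) := by
  have hC : (0 : ℝ) < Nat.choose (2 * N) N := by exact_mod_cast Nat.choose_pos (by omega)
  rw [pow_mul_tieProb, tieProb, mul_le_mul_iff_right₀ hC,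
    pow_le_pow_iff_left₀ (by positivity) hu hN]

lemma tieProb_eq_pow_mul_tieProb_iff (hN : N ≠ 0) {x s u : ℝ} (hx : 0 ≤ x)
    (hs : 0 ≤ s * (1 - s)) (hu : 0 ≤ u * (1 - u)) :
    tieProb N u = x ^ N * tieProb N s ↔ u * (1 - u) = x * (s * (1 - s)) := by
  have hC : (0 : ℝ) < Nat.choose (2 * N) N := by exact_mod_cast Nat.choose_pos (by omega)
  rw [pow_mul_tieProb, tieProb, mul_right_inj' hC.ne', pow_left_inj₀ hu (by positivity) hN]

end tieProb

section pivotal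

variable {N : ℕ} {q qA qB a b : ℝ}

lemma phiA_eq_tieProb (N : ℕ) (q : ℝ) (σ : ℝ × ℝ) :
    phiA N q σ = tieProb N (q * σ.1 + (1 - q) * (1 - σ.2)) := by
  rw [phiA, tieProb, mul_pow, ← mul_assoc]
  ring

lemma phiB_eq_phiA_swap (N : ℕ) (q : ℝ) (σ : ℝ × ℝ) : phiB N q σ = phiA N q σ.swap := rfl

lemma phiA_nonneg (hq0 : 0 ≤ q) (hq1 : q ≤ 1) {σ : ℝ × ℝ} (h1 : σ.1 ∈ Set.Icc (0 : ℝ) 1)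
    (h2 : σ.2 ∈ Set.Icc (0 : ℝ) 1) : 0 ≤ phiA N q σ := by
  obtain ⟨h10, h11⟩ := h1
  obtain ⟨h20, h21⟩ := h2
  rw [phiA_eq_tieProb]
  exact tieProb_nonneg (by nlinarith) (by nlinarith)

lemma phiA_mk_one : phiA N q (a, 1) = tieProb N (q * a) := by
  rw [phiA_eq_tieProb]
  ring_nf

lemma phiA_one_mk : phiA N q (1, b) = tieProb N ((1 - q) * b) := by
  rw [← tieProb_one_sub, phiA_eq_tieProb]
  ring_nf

lemma phiB_mk_one : phiB N q (a, 1) = tieProb N ((1 - q) * a) :=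
  phiA_one_mk

lemma phiB_one_mk : phiB N q (1, b) = tieProb N (q * b) :=
  phiA_mk_one

lemma phiA_one_le_phiB_one (hsum : 1 ≤ qA + qB) (hqBA : qB ≤ qA) (hqA : qA ≤ 1)
    (hb0 : 0 ≤ b) (hb1 : b ≤ 1) : phiA N qA (1, b) ≤ phiB N qB (1, b) := by
  rw [phiA_one_mk, phiB_one_mk]
  apply tieProb_le_tieProb (mul_one_sub_nonneg (by positivity) (by nlinarith))
  have hfactor : qB * b * (1 - qB * b) - (1 - qA) * b * (1 - (1 - qA) * b) =
      b * (qA + qB - 1) * (1 - b * (1 + qB - qA)) := by ring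
  nlinarith [mul_nonneg (mul_nonneg hb0 (sub_nonneg.2 hsum)) (by nlinarith : 0 ≤ 1 - b * (1 + qB - qA))]

end pivotal

section thresholds

variable {qA qB w : ℝ}

lemma psi_pos (hqA : 0 < qA) (hqB : qB < 1) (hw0 : 0 ≤ w) (hw1 : w < 1) : 0 < psi qA qB w := by
  unfold psi
  apply div_pos <;> nlinarith

lemma psi_lt_one (hsum : 1 < qA + qB) (hqB : qB < 1) (hw0 : 0 ≤ w) :
    psi qA qB w < 1 := by
  rw [psi, div_lt_one (by nlinarith)]
  nlinarith

lemma one_lt_tHigh (hsum : 1 < qA + qB) (hqA : qA < 1) (hw0 : 0 ≤ w) (hw1 : w < 1) :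
    1 < tHigh qA qB w := by
  rw [tHigh, one_lt_div (by nlinarith)]
  nlinarith

end thresholds

section equilibrium

variable {N : ℕ} {qA qB w : ℝ} {σ : ℝ × ℝ}

lemma IsEquilibrium.snd_eq_one (h : IsEquilibrium N qA qB w σ) (hN : N ≠ 0) (hqB : 0 < qB)
    (hqBA : qB ≤ qA) (hqA : qA ≤ 1) (hsum : 1 ≤ qA + qB)
    (htLH : tLow qA qB w < tHigh qA qB w) (htH : 1 < tHigh qA qB w) : σ.2 = 1 := by
  obtain ⟨a, b⟩ := σ
  obtain ⟨⟨ha0, ha1⟩, ⟨hb0, hb1⟩, hpos, -, hA0, hAint, -, hB0, hBint⟩ := h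
  dsimp only at *
  by_contra hb
  replace hb1 := hb1.lt_of_ne hb
  rcases ha1.lt_or_eq with ha1 | rfl
  · have hA : phiA N qA (a, b) ≤ tLow qA qB w * phiB N qB (a, b) := by
      rcases ha0.eq_or_lt with rfl | ha0
      exacts [hA0 rfl, (hAint ha0 ha1).le]
    have hB : tHigh qA qB w * phiB N qB (a, b) ≤ phiA N qA (a, b) := by
      rcases hb0.eq_or_lt with rfl | hb0
      exacts [hB0 rfl, (hBint hb0 hb1).ge]
    have hφB : 0 ≤ phiB N qB (a, b) := by
      rw [phiB_eq_phiA_swap]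
      exact phiA_nonneg hqB.le (by linarith) ⟨hb0, hb1.le⟩ ⟨ha0, ha1.le⟩
    have hφB0 : phiB N qB (a, b) = 0 := by
      refine le_antisymm ?_ hφB
      by_contra! hφB_pos
      linarith [mul_lt_mul_of_pos_right htLH hφB_pos]
    rw [hφB0, mul_zero] at hA
    linarith
  · rcases hb0.eq_or_lt with rfl | hb0
    · simp [phiA_one_mk, phiB_one_mk, tieProb_zero hN] at hpos
    · have hφB : 0 < phiB N qB (1, b) := by
        rw [phiB_one_mk]
        exact tieProb_pos (by positivity) (by nlinarith)
      have := phiA_one_le_phiB_one (N := N) hsum hqBA hqA hb0.le hb1.le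
      have := hBint hb0 hb1
      nlinarith

lemma IsEquilibrium.fst_pos (h : IsEquilibrium N qA qB w σ) (hN : N ≠ 0) (hb : σ.2 = 1) :
    0 < σ.1 := by
  obtain ⟨a, b⟩ := σ
  dsimp only at hb
  subst hb
  obtain ⟨⟨ha0, -⟩, -, hpos, -⟩ := h
  rcases ha0.eq_or_lt with rfl | ha0
  · simp [phiA_mk_one, phiB_mk_one, tieProb_zero hN] at hpos
  · exact ha0

end equilibrium

section slice

variable {N : ℕ} {qA qB x a : ℝ}

lemma mul_one_sub_sub_mul_one_sub (qA qB x a : ℝ) :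
    qA * a * (1 - qA * a) - x * ((1 - qB) * a * (1 - (1 - qB) * a)) =
      a * ((qA - x * (1 - qB)) - a * (qA ^ 2 - x * (1 - qB) ^ 2)) := by
  ring

lemma pow_mul_phiB_le_phiA_iff (hN : N ≠ 0) (hx : 0 ≤ x) (ha0 : 0 < a) (ha1 : a ≤ 1)
    (hqA0 : 0 ≤ qA) (hqA1 : qA ≤ 1) (hqB0 : 0 ≤ qB) (hqB1 : qB ≤ 1) :
    x ^ N * phiB N qB (a, 1) ≤ phiA N qA (a, 1) ↔
      0 ≤ (qA - x * (1 - qB)) - a * (qA ^ 2 - x * (1 - qB) ^ 2) := by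
  rw [phiA_mk_one, phiB_mk_one, pow_mul_tieProb_le_tieProb_iff hN hx
    (mul_one_sub_nonneg (by positivity) (by nlinarith))
    (mul_one_sub_nonneg (by positivity) (by nlinarith)), ← sub_nonneg,
    mul_one_sub_sub_mul_one_sub, mul_nonneg_iff_of_pos_left ha0]

lemma phiA_eq_pow_mul_phiB_iff (hN : N ≠ 0) (hx : 0 ≤ x) (ha0 : 0 < a) (ha1 : a ≤ 1)
    (hqA0 : 0 ≤ qA) (hqA1 : qA ≤ 1) (hqB0 : 0 ≤ qB) (hqB1 : qB ≤ 1) :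
    phiA N qA (a, 1) = x ^ N * phiB N qB (a, 1) ↔
      (qA - x * (1 - qB)) - a * (qA ^ 2 - x * (1 - qB) ^ 2) = 0 := by
  rw [phiA_mk_one, phiB_mk_one, tieProb_eq_pow_mul_tieProb_iff hN hx
    (mul_one_sub_nonneg (by positivity) (by nlinarith))
    (mul_one_sub_nonneg (by positivity) (by nlinarith)), ← sub_eq_zero,
    mul_one_sub_sub_mul_one_sub, mul_eq_zero, or_iff_right ha0.ne']

end slice

/-- On the slice `σ^B = 1` the `A`-signal voters' conditions reduce to this, where `n − a d` has
the sign of `φ_A − t_low φ_B` at `σ^A = a`. -/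
def IsBestResponseA (n d a : ℝ) : Prop :=
  0 < a ∧ a ≤ 1 ∧ 0 ≤ n - a * d ∧ (a < 1 → n - a * d = 0)

section bestResponse

variable {n d a : ℝ}

lemma isBestResponseA_iff_eq_one (hd : 0 ≤ d) (hdn : d < n) : IsBestResponseA n d a ↔ a = 1 := by
  constructor
  · rintro ⟨-, ha1, -, hroot⟩
    by_contra ha
    have := hroot (ha1.lt_of_ne ha)
    nlinarith
  · rintro rfl
    exact ⟨one_pos, le_rfl, by linarith, fun h => absurd h (lt_irrefl 1)⟩

lemma isBestResponseA_iff_eq_div (hn : 0 < n) (hnd : n ≤ d) :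
    IsBestResponseA n d a ↔ a = n / d := by
  have hd : 0 < d := hn.trans_le hnd
  rw [eq_div_iff hd.ne']
  constructor
  · rintro ⟨-, ha1, hgap, hroot⟩
    rcases ha1.lt_or_eq with ha1 | rfl
    · linarith [hroot ha1]
    · linarith
  · intro had
    refine ⟨pos_of_mul_pos_left (had ▸ hn) hd.le, ?_, by linarith, fun _ => by linarith⟩
    exact le_of_mul_le_mul_right (by linarith) hd

end bestResponse

section characterization

variable {N : ℕ} {qA qB w x : ℝ}

lemma IsEquilibrium.isBestResponseA {σ : ℝ × ℝ} (h : IsEquilibrium N qA qB w σ) (hN : N ≠ 0)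
    (hqB : 1 / 2 < qB) (hqBA : qB ≤ qA) (hqA : qA < 1) (hw0 : 0 ≤ w) (hw1 : w < 1)
    (hx : 0 ≤ x) (hxN : x ^ N = tLow qA qB w) :
    σ.2 = 1 ∧ IsBestResponseA (qA - x * (1 - qB)) (qA ^ 2 - x * (1 - qB) ^ 2) σ.1 := by
  have htL : tLow qA qB w < 1 := psi_lt_one (by linarith) (by linarith) hw0
  have htH : 1 < tHigh qA qB w := one_lt_tHigh (by linarith) hqA hw0 hw1
  have hb := h.snd_eq_one hN (by linarith) hqBA hqA.le (by linarith) (htL.trans htH) htH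
  have ha0 := h.fst_pos hN hb
  obtain ⟨a, b⟩ := σ
  dsimp only at hb ha0 ⊢
  subst hb
  obtain ⟨⟨-, ha1⟩, -, -, hA1, -, hAint, -⟩ := h
  rw [← hxN] at hA1 hAint
  have hroot : a < 1 → _ := fun ha => (phiA_eq_pow_mul_phiB_iff hN hx ha0 ha1
    (by linarith) hqA.le (by linarith) (by linarith)).1 (hAint ha0 ha)
  refine ⟨rfl, ha0, ha1, ?_, hroot⟩
  rcases ha1.lt_or_eq with ha1' | rfl
  · exact (hroot ha1').ge
  · exact (pow_mul_phiB_le_phiA_iff hN hx ha0 ha1 (by linarith) hqA.le (by linarith)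
      (by linarith)).1 (hA1 rfl)

lemma isEquilibrium_mk_one {a : ℝ} (hN : N ≠ 0) (hqB : 1 / 2 < qB) (hqBA : qB ≤ qA)
    (hqA : qA < 1) (hw0 : 0 ≤ w) (hw1 : w < 1) (hx : 0 ≤ x) (hxN : x ^ N = tLow qA qB w)
    (h : IsBestResponseA (qA - x * (1 - qB)) (qA ^ 2 - x * (1 - qB) ^ 2) a) :
    IsEquilibrium N qA qB w (a, 1) := by
  obtain ⟨ha0, ha1, hgap, hroot⟩ := h
  have htL : tLow qA qB w < 1 := psi_lt_one (by linarith) (by linarith) hw0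
  have htH : 1 < tHigh qA qB w := one_lt_tHigh (by linarith) hqA hw0 hw1
  have hφA : 0 < phiA N qA (a, 1) := by
    rw [phiA_mk_one]
    exact tieProb_pos (by nlinarith) (by nlinarith)
  have hφB : 0 < phiB N qB (a, 1) := by
    rw [phiB_mk_one]
    exact tieProb_pos (by nlinarith) (by nlinarith)
  have hmixed : a < 1 → phiA N qA (a, 1) = x ^ N * phiB N qB (a, 1) := fun ha =>
    (phiA_eq_pow_mul_phiB_iff hN hx ha0 ha1 (by linarith) hqA.le (by linarith)
      (by linarith)).2 (hroot ha)
  refine ⟨⟨ha0.le, ha1⟩, ⟨zero_le_one, le_rfl⟩, by linarith, fun _ => ?_,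
    fun h => absurd h ha0.ne', fun _ ha => hxN ▸ hmixed ha, fun _ => ?_,
    fun h => absurd h one_ne_zero, fun _ h => absurd h (lt_irrefl 1)⟩
  · exact hxN ▸ (pow_mul_phiB_le_phiA_iff hN hx ha0 ha1 (by linarith) hqA.le (by linarith)
      (by linarith)).2 hgap
  · rcases ha1.lt_or_eq with ha1 | rfl
    · rw [hmixed ha1, hxN]
      nlinarith
    · have := phiA_one_le_phiB_one (N := N) (by linarith) hqBA hqA.le zero_le_one le_rfl
      nlinarith

theorem isEquilibrium_iff (hN : N ≠ 0) (hqB : 1 / 2 < qB) (hqBA : qB ≤ qA) (hqA : qA < 1)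
    (hw0 : 0 ≤ w) (hw1 : w < 1) (hx : 0 ≤ x) (hxN : x ^ N = tLow qA qB w) (σ : ℝ × ℝ) :
    IsEquilibrium N qA qB w σ ↔
      σ.2 = 1 ∧ IsBestResponseA (qA - x * (1 - qB)) (qA ^ 2 - x * (1 - qB) ^ 2) σ.1 := by
  refine ⟨fun h => h.isBestResponseA hN hqB hqBA hqA hw0 hw1 hx hxN, ?_⟩
  obtain ⟨a, b⟩ := σ
  rintro ⟨rfl, h⟩
  exact isEquilibrium_mk_one hN hqB hqBA hqA hw0 hw1 hx hxN h

end characterization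

lemma natCast_lt_ceil_log_div_log_iff {N : ℕ} (hN : N ≠ 0) {ψ r : ℝ} (hψ : 0 < ψ) (hr0 : 0 < r)
    (hr1 : r < 1) : (N : ℤ) < ⌈Real.log ψ / Real.log r⌉ ↔ ψ ^ ((1 : ℝ) / N) < r := by
  rw [Int.lt_ceil, Int.cast_natCast, lt_div_iff_of_neg (Real.log_neg hr0 hr1), ← Real.log_pow,
    Real.log_lt_log_iff hψ (pow_pos hr0 N), one_div,
    Real.rpow_inv_lt_iff_of_pos hψ.le hr0.le (by positivity), Real.rpow_natCast]

/-- **Proposition 1** (equilibrium characterization): if `q_A = q_B` the unique equilibrium is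
sincere voting `(1,1)`; if `q_A > q_B` the unique equilibrium is `(1,1)` for `N < N*(w)` and
`(σ*_N(w), 1)` for `N ≥ N*(w)`. -/
theorem condorcet_equilibrium (N : ℕ) (hN : 1 ≤ N) (qA qB w : ℝ)
    (hqB : 1 / 2 < qB) (hqBA : qB ≤ qA) (hqA : qA < 1)
    (hw0 : 0 ≤ w) (hw1 : w < 1) :
    (qA = qB → ∀ σ : ℝ × ℝ, IsEquilibrium N qA qB w σ ↔ σ = (1, 1)) ∧
    (qB < qA →
      ((N : ℤ) < Nstar qA qB w →
        ∀ σ : ℝ × ℝ, IsEquilibrium N qA qB w σ ↔ σ = (1, 1)) ∧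
      (Nstar qA qB w ≤ (N : ℤ) →
        ∀ σ : ℝ × ℝ, IsEquilibrium N qA qB w σ ↔ σ = (sigmaStar N qA qB w, 1))) := by
  have hN0 : N ≠ 0 := by omega
  have hψ0 : 0 < psi qA qB w := psi_pos (by linarith) (by linarith) hw0 hw1
  have hψ1 : psi qA qB w < 1 := psi_lt_one (by linarith) (by linarith) hw0
  set x := psi qA qB w ^ ((1 : ℝ) / N) with hx
  have hx0 : 0 < x := by positivity
  have hx1 : x < 1 := Real.rpow_lt_one hψ0.le hψ1 (by positivity)
  have hxN : x ^ N = tLow qA qB w := by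
    rw [hx, one_div, Real.rpow_inv_natCast_pow hψ0.le hN0]
    rfl
  have hB : 0 < qB * (1 - qB) := by nlinarith
  have hchar := isEquilibrium_iff hN0 hqB hqBA hqA hw0 hw1 hx0.le hxN
  have hsincere (hgap : x * (qB * (1 - qB)) < qA * (1 - qA)) (σ : ℝ × ℝ) :
      IsEquilibrium N qA qB w σ ↔ σ = (1, 1) := by
    rw [hchar, isBestResponseA_iff_eq_one (by nlinarith) (by nlinarith), Prod.ext_iff, and_comm]
  refine ⟨fun hAB => hsincere (by subst hAB; nlinarith), fun hBA => ?_⟩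
  have hr0 : 0 < qA * (1 - qA) / (qB * (1 - qB)) := div_pos (by nlinarith) hB
  have hr1 : qA * (1 - qA) / (qB * (1 - qB)) < 1 := (div_lt_one hB).2 (by nlinarith)
  have hNstar := natCast_lt_ceil_log_div_log_iff hN0 hψ0 hr0 hr1
  rw [lt_div_iff₀ hB] at hNstar
  refine ⟨fun hlt => hsincere (hNstar.1 hlt), fun hle σ => ?_⟩
  have hgap := not_lt.1 (hNstar.not.1 (not_lt.2 hle))
  rw [hchar, isBestResponseA_iff_eq_div (by nlinarith) (by nlinarith), Prod.ext_iff, and_comm]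
  rfl
end

section
/- Suppose 1/2 < q_B < q_A < 1 and w ∈ [0,1). Then for every positive integer N, the quantity σ*_N(w) = (q_A − ψ(w)^{1/N}(1−q_B)) / (q_A² − ψ(w)^{1/N}(1−q_B)²) satisfies σ*_N(w) > 0, and σ*_N(w) ≤ 1 holds if and only if N ≥ N*(w). -/
/-- For `1/2 < q_B < q_A < 1`, `w ∈ [0,1)` and any positive integer `N`, the mixing
probability `σ*_N(w)` is positive, and `σ*_N(w) ≤ 1` holds iff `N ≥ N*(w)`. -/
theorem sigmaStar_pos_and_le_one_iff (qA qB w : ℝ)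
    (hqB : 1 / 2 < qB) (hqBA : qB < qA) (hqA : qA < 1)
    (hw0 : 0 ≤ w) (hw1 : w < 1) (N : ℕ) (hN : 1 ≤ N) :
    0 < sigmaStar N qA qB w ∧
      (sigmaStar N qA qB w ≤ 1 ↔ Nstar qA qB w ≤ (N : ℤ)) := by
  have h1B : 0 < 1 - qB := by linarith
  have hqA0 : 0 < qA := by linarith
  have hden0 : 0 < qA + w * (1 - qB) := by positivity
  have hp0 : 0 < psi qA qB w := div_pos (mul_pos (by linarith) h1B) hden0
  have hp1 : psi qA qB w < 1 := by
    rw [psi, div_lt_one hden0]; nlinarith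
  have hNR : (0 : ℝ) < (N : ℝ) := by exact_mod_cast hN
  have hN0 : (0 : ℝ) < 1 / N := by positivity
  set p := psi qA qB w with hp
  set t := p ^ ((1 : ℝ) / N) with ht
  have ht0 : 0 < t := Real.rpow_pos_of_pos hp0 _
  have ht1 : t < 1 := Real.rpow_lt_one hp0.le hp1 hN0
  have hnum : 0 < qA - t * (1 - qB) := by nlinarith
  have hden2 : 0 < qA ^ 2 - t * (1 - qB) ^ 2 := by nlinarith
  have hs : sigmaStar N qA qB w = (qA - t * (1 - qB)) / (qA ^ 2 - t * (1 - qB) ^ 2) := rfl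
  have hqB0 : 0 < qB * (1 - qB) := by nlinarith
  have hr0 : 0 < qA * (1 - qA) / (qB * (1 - qB)) :=
    div_pos (by nlinarith) hqB0
  have hr1 : qA * (1 - qA) / (qB * (1 - qB)) < 1 := by
    rw [div_lt_one hqB0]; nlinarith
  set r := qA * (1 - qA) / (qB * (1 - qB)) with hrr
  have hlogr : Real.log r < 0 := Real.log_neg hr0 hr1
  constructor
  · rw [hs]; exact div_pos hnum hden2
  · rw [hs, div_le_one hden2]
    have key : (qA - t * (1 - qB) ≤ qA ^ 2 - t * (1 - qB) ^ 2) ↔ r ≤ t := by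
      rw [hrr, div_le_iff₀ hqB0]
      constructor <;> intro h <;> nlinarith
    rw [key]
    have hlog : r ≤ t ↔ Real.log r ≤ Real.log t :=
      (Real.log_le_log_iff hr0 ht0).symm
    rw [hlog, ht, Real.log_rpow hp0]
    have hchain : Real.log r ≤ 1 / (N : ℝ) * Real.log p ↔
        Real.log p / Real.log r ≤ (N : ℝ) := by
      rw [div_le_iff_of_neg hlogr]
      constructor <;> intro h
      · calc (N : ℝ) * Real.log r = (N : ℝ) * Real.log r := rfl
          _ ≤ (N : ℝ) * (1 / (N : ℝ) * Real.log p) := by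
              exact mul_le_mul_of_nonneg_left h hNR.le
          _ = Real.log p := by field_simp
      · have := mul_le_mul_of_nonneg_left h (le_of_lt (show (0:ℝ) < 1 / N from hN0))
        calc Real.log r = 1 / (N : ℝ) * ((N : ℝ) * Real.log r) := by field_simp
          _ ≤ 1 / (N : ℝ) * Real.log p := this
    rw [hchain, Nstar]
    constructor
    · intro h
      exact Int.ceil_le.mpr (by exact_mod_cast h)
    · intro h
      have := Int.ceil_le.mp h
      exact_mod_cast this
end

section
/- Suppose 1/2 < q_B ≤ q_A < 1 and fix a positive integer N. Then the map w ↦ ψ(w) = (1−w)(1−q_B)/(q_A + w(1−q_B)) is strictly decreasing on [0,1), and the map w ↦ σ*_N(w) = (q_A − ψ(w)^{1/N}(1−q_B)) / (q_A² − ψ(w)^{1/N}(1−q_B)²) is strictly increasing on [0,1). -/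
/-- For `1/2 < q_B ≤ q_A < 1` and a fixed positive integer `N`, the map `w ↦ ψ(w)` is
strictly decreasing on `[0,1)` and the map `w ↦ σ*_N(w)` is strictly increasing on `[0,1)`. -/
theorem psi_strictAnti_sigmaStar_strictMono (qA qB : ℝ)
    (hqB : 1 / 2 < qB) (hqBA : qB ≤ qA) (hqA : qA < 1)
    (N : ℕ) (hN : 1 ≤ N) :
    StrictAntiOn (fun w => psi qA qB w) (Set.Ico (0 : ℝ) 1) ∧
      StrictMonoOn (fun w => sigmaStar N qA qB w) (Set.Ico (0 : ℝ) 1) := by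
  have hc : 0 < 1 - qB := by linarith
  have hcA : 1 - qB < qA := by linarith
  have hqA0 : 0 < qA := by linarith
  have hden : ∀ w ∈ Set.Ico (0:ℝ) 1, 0 < qA + w * (1 - qB) := by
    intro w hw; nlinarith [hw.1]
  have hpsi_pos : ∀ w ∈ Set.Ico (0:ℝ) 1, 0 < psi qA qB w := by
    intro w hw
    have h1 : 0 < (1 - w) * (1 - qB) := by nlinarith [hw.2]
    exact div_pos h1 (hden w hw)
  have hpsi_lt_one : ∀ w ∈ Set.Ico (0:ℝ) 1, psi qA qB w < 1 := by
    intro w hw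
    rw [psi, div_lt_one (hden w hw)]
    nlinarith [hw.1]
  have hanti : StrictAntiOn (fun w => psi qA qB w) (Set.Ico (0:ℝ) 1) := by
    intro w1 h1 w2 h2 h12
    simp only [psi]
    rw [div_lt_div_iff₀ (hden w2 h2) (hden w1 h1)]
    nlinarith [mul_pos hc (mul_pos (sub_pos.mpr h12) (show (0:ℝ) < qA + (1 - qB) by linarith))]
  refine ⟨hanti, ?_⟩
  intro w1 h1 w2 h2 h12
  have hN0 : (0:ℝ) < N := by exact_mod_cast hN
  have he : (0:ℝ) < 1 / N := by positivity
  set t1 := psi qA qB w2 ^ ((1:ℝ) / N) with ht1d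
  set t2 := psi qA qB w1 ^ ((1:ℝ) / N) with ht2d
  have hpsilt : psi qA qB w2 < psi qA qB w1 := hanti h1 h2 h12
  have ht12 : t1 < t2 :=
    Real.rpow_lt_rpow (le_of_lt (hpsi_pos w2 h2)) hpsilt he
  have ht1pos : 0 < t1 := Real.rpow_pos_of_pos (hpsi_pos w2 h2) _
  have ht2lt : t2 < 1 :=
    Real.rpow_lt_one (le_of_lt (hpsi_pos w1 h1)) (hpsi_lt_one w1 h1) he
  have hsq : (1 - qB) ^ 2 < qA ^ 2 := by nlinarith
  have hd1 : 0 < qA ^ 2 - t1 * (1 - qB) ^ 2 := by nlinarith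
  have hd2 : 0 < qA ^ 2 - t2 * (1 - qB) ^ 2 := by nlinarith
  simp only [sigmaStar, ← ht1d, ← ht2d]
  rw [div_lt_div_iff₀ hd2 hd1]
  nlinarith [mul_pos (mul_pos hc hqA0) (mul_pos (sub_pos.mpr hcA) (sub_pos.mpr ht12))]
end

section
/- Suppose 1/2 < q_B < q_A < 1 and w ∈ [0,1). Define, for N ≥ N*(w), the ex ante equilibrium vote probabilities σ̃^A_N = q_A·σ*_N(w) and σ̃^B_N = 1 − (1−q_B)·σ*_N(w). Then σ̃^A_N → q_A/(1 + q_A − q_B) > 1/2 and σ̃^B_N → 1 − (1−q_B)/(1 + q_A − q_B) > 1/2 as N → ∞, and consequently the probability of a correct majority decision tends to one in both states: lim_{N→∞} P[ Binom(2N+1, σ̃^A_N) ≥ N+1 ] = 1 and lim_{N→∞} P[ Binom(2N+1, σ̃^B_N) ≥ N+1 ] = 1. -/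
open Filter

/-- `P[Binom(2N+1, p) ≥ N+1]`: the probability that a majority of the `2N+1` votes succeed. -/
noncomputable def majProb (N : ℕ) (p : ℝ) : ℝ :=
  ∑ j ∈ Finset.Icc (N + 1) (2 * N + 1),
    (Nat.choose (2 * N + 1) j : ℝ) * p ^ j * (1 - p) ^ (2 * N + 1 - j)

lemma total_sum (N : ℕ) (p : ℝ) :
    ∑ j ∈ Finset.range (2*N+2), (Nat.choose (2*N+1) j : ℝ) * p ^ j * (1 - p) ^ (2*N+1-j) = 1 := by
  calc ∑ j ∈ Finset.range (2*N+2), (Nat.choose (2*N+1) j : ℝ) * p ^ j * (1 - p) ^ (2*N+1-j)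
      = ∑ j ∈ Finset.range (2*N+1+1), p ^ j * (1 - p) ^ (2*N+1-j) * (Nat.choose (2*N+1) j : ℝ) :=
        Finset.sum_congr rfl (fun j _ => by ring)
    _ = (p + (1-p)) ^ (2*N+1) := (add_pow p (1-p) (2*N+1)).symm
    _ = 1 := by norm_num

lemma split_sum (N : ℕ) (p : ℝ) :
    (∑ j ∈ Finset.range (N+1), (Nat.choose (2*N+1) j : ℝ) * p ^ j * (1 - p) ^ (2*N+1-j))
      + majProb N p = 1 := by
  have hIcc : Finset.Icc (N+1) (2*N+1) = Finset.Ico (N+1) (2*N+2) := by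
    exact (Finset.Ico_add_one_right_eq_Icc ..).symm
  rw [majProb, hIcc, Finset.sum_range_add_sum_Ico _ (by omega : N+1 ≤ 2*N+2)]
  exact total_sum N p

lemma majProb_le_one (N : ℕ) (p : ℝ) (h0 : 0 ≤ p) (h1 : p ≤ 1) : majProb N p ≤ 1 := by
  have h := split_sum N p
  have hnn : 0 ≤ ∑ j ∈ Finset.range (N+1), (Nat.choose (2*N+1) j : ℝ) * p ^ j * (1 - p) ^ (2*N+1-j) := by
    apply Finset.sum_nonneg
    intro j _
    have : (0:ℝ) ≤ 1 - p := by linarith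
    positivity
  linarith

lemma majProb_lower (N : ℕ) (p : ℝ) (h0 : 1/2 ≤ p) (h1 : p ≤ 1) :
    1 - (4*p*(1-p))^N ≤ majProb N p := by
  have hp0 : (0:ℝ) ≤ p := by linarith
  have hq0 : (0:ℝ) ≤ 1 - p := by linarith
  have hterm : ∀ j ∈ Finset.range (N+1),
      (Nat.choose (2*N+1) j : ℝ) * p ^ j * (1 - p) ^ (2*N+1-j)
        ≤ (Nat.choose (2*N+1) j : ℝ) * (p ^ N * (1-p) ^ (N+1)) := by
    intro j hj
    have hjN : j ≤ N := by simpa [Nat.lt_succ_iff] using hj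
    have key : p ^ j * (1-p) ^ (2*N+1-j) ≤ p ^ N * (1-p) ^ (N+1) := by
      have e : 2*N+1-j = (N+1)+(N-j) := by omega
      have h2 : (1-p) ^ (N-j) ≤ p ^ (N-j) := pow_le_pow_left₀ hq0 (by linarith) _
      calc p ^ j * (1-p) ^ (2*N+1-j) = p ^ j * ((1-p) ^ (N+1) * (1-p) ^ (N-j)) := by
            rw [e, pow_add]
        _ ≤ p ^ j * ((1-p) ^ (N+1) * p ^ (N-j)) := by
            apply mul_le_mul_of_nonneg_left (mul_le_mul_of_nonneg_left h2 (by positivity))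
              (by positivity)
        _ = p ^ j * p ^ (N-j) * (1-p) ^ (N+1) := by ring
        _ = p ^ N * (1-p) ^ (N+1) := by
            rw [← pow_add, Nat.add_sub_cancel' hjN]
    calc (Nat.choose (2*N+1) j : ℝ) * p ^ j * (1 - p) ^ (2*N+1-j)
        = (Nat.choose (2*N+1) j : ℝ) * (p ^ j * (1 - p) ^ (2*N+1-j)) := by ring
      _ ≤ (Nat.choose (2*N+1) j : ℝ) * (p ^ N * (1-p) ^ (N+1)) := by
          exact mul_le_mul_of_nonneg_left key (by positivity)
  have hsum : (∑ j ∈ Finset.range (N+1), (Nat.choose (2*N+1) j : ℝ) * p ^ j * (1 - p) ^ (2*N+1-j))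
      ≤ (4:ℝ)^N * (p ^ N * (1-p) ^ (N+1)) := by
    calc (∑ j ∈ Finset.range (N+1), (Nat.choose (2*N+1) j : ℝ) * p ^ j * (1 - p) ^ (2*N+1-j))
        ≤ ∑ j ∈ Finset.range (N+1), (Nat.choose (2*N+1) j : ℝ) * (p ^ N * (1-p) ^ (N+1)) :=
          Finset.sum_le_sum hterm
      _ = (∑ j ∈ Finset.range (N+1), (Nat.choose (2*N+1) j : ℝ)) * (p ^ N * (1-p) ^ (N+1)) := by
          rw [← Finset.sum_mul]
      _ = (4:ℝ)^N * (p ^ N * (1-p) ^ (N+1)) := by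
          congr 1
          have := Nat.sum_range_choose_halfway N
          exact_mod_cast congrArg (Nat.cast : ℕ → ℝ) this
  have hbd : (4:ℝ)^N * (p ^ N * (1-p) ^ (N+1)) ≤ (4*p*(1-p))^N := by
    have : (4:ℝ)^N * (p ^ N * (1-p) ^ (N+1)) = (4*p*(1-p))^N * (1-p) := by
      rw [mul_pow, mul_pow, pow_succ]; ring
    rw [this]
    nlinarith [pow_nonneg (by nlinarith : (0:ℝ) ≤ 4*p*(1-p)) N]
  have h := split_sum N p
  linarith

lemma majProb_tendsto_one {p : ℕ → ℝ} {L : ℝ} (hL1 : 1/2 < L) (hL2 : L < 1)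
    (hp : Tendsto p atTop (nhds L)) :
    Tendsto (fun N => majProb N (p N)) atTop (nhds 1) := by
  set p₀ : ℝ := (1/2 + L)/2 with hp₀
  have hp₀1 : 1/2 < p₀ := by rw [hp₀]; linarith
  have hp₀L : p₀ < L := by rw [hp₀]; linarith
  set r : ℝ := 4*p₀*(1-p₀) with hr
  have hr0 : 0 ≤ r := by rw [hr]; nlinarith
  have hr1 : r < 1 := by rw [hr]; nlinarith
  have hev : ∀ᶠ N in atTop, p N ∈ Set.Ioo p₀ 1 :=
    hp.eventually (Ioo_mem_nhds hp₀L hL2)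
  have hlow : ∀ᶠ N in atTop, 1 - r^N ≤ majProb N (p N) := by
    filter_upwards [hev] with N hN
    obtain ⟨h1, h2⟩ := hN
    have hb := majProb_lower N (p N) (by linarith) (le_of_lt h2)
    have : (4*(p N)*(1-(p N)))^N ≤ r^N := by
      apply pow_le_pow_left₀ (by nlinarith)
      rw [hr]; nlinarith
    linarith
  have hhigh : ∀ᶠ N in atTop, majProb N (p N) ≤ 1 := by
    filter_upwards [hev] with N hN
    exact majProb_le_one N (p N) (by linarith [hN.1]) (le_of_lt hN.2)
  have hlim : Tendsto (fun N : ℕ => 1 - r^N) atTop (nhds 1) := by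
    have := tendsto_pow_atTop_nhds_zero_of_lt_one hr0 hr1
    simpa using (tendsto_const_nhds.sub this)
  exact tendsto_of_tendsto_of_tendsto_of_le_of_le' hlim tendsto_const_nhds hlow hhigh

/-- **Proposition 2(i)** (information aggregation): the ex ante equilibrium vote probabilities
`σ̃^A_N = q_A σ*_N(w)` and `σ̃^B_N = 1 − (1−q_B) σ*_N(w)` converge to limits strictly above
`1/2`, and the probability of a correct majority decision tends to one in both states. -/
theorem condorcet_information_aggregation (qA qB w : ℝ)
    (hqB : 1 / 2 < qB) (hqBA : qB < qA) (hqA : qA < 1)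
    (hw0 : 0 ≤ w) (hw1 : w < 1) :
    Tendsto (fun N : ℕ => qA * sigmaStar N qA qB w) atTop
        (nhds (qA / (1 + qA - qB))) ∧
      1 / 2 < qA / (1 + qA - qB) ∧
    Tendsto (fun N : ℕ => 1 - (1 - qB) * sigmaStar N qA qB w) atTop
        (nhds (1 - (1 - qB) / (1 + qA - qB))) ∧
      1 / 2 < 1 - (1 - qB) / (1 + qA - qB) ∧
    Tendsto (fun N : ℕ => majProb N (qA * sigmaStar N qA qB w)) atTop (nhds 1) ∧
    Tendsto (fun N : ℕ => majProb N (1 - (1 - qB) * sigmaStar N qA qB w)) atTop (nhds 1) := by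
  have hψ : 0 < psi qA qB w := by
    unfold psi; apply div_pos <;> nlinarith
  have h1N : Tendsto (fun N : ℕ => (1:ℝ)/N) atTop (nhds 0) :=
    tendsto_one_div_atTop_nhds_zero_nat
  have hcont : ContinuousAt (fun x : ℝ => psi qA qB w ^ x) 0 :=
    Real.continuousAt_const_rpow (ne_of_gt hψ)
  have hrpow : Tendsto (fun N : ℕ => psi qA qB w ^ ((1:ℝ)/N)) atTop (nhds 1) := by
    have := hcont.tendsto.comp h1N
    simpa [Function.comp_def, Real.rpow_zero] using this
  have hD : (0:ℝ) < 1 + qA - qB := by linarith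
  have hden : qA^2 - 1*(1-qB)^2 ≠ 0 := by nlinarith
  have hσ : Tendsto (fun N => sigmaStar N qA qB w) atTop
      (nhds ((qA - 1*(1-qB))/(qA^2 - 1*(1-qB)^2))) := by
    unfold sigmaStar
    exact ((tendsto_const_nhds.sub (hrpow.mul tendsto_const_nhds)).div
      (tendsto_const_nhds.sub (hrpow.mul tendsto_const_nhds)) hden)
  have hval : (qA - 1*(1-qB))/(qA^2 - 1*(1-qB)^2) = 1/(1+qA-qB) := by
    have hne : qA - (1-qB) ≠ 0 := by nlinarith
    have hne2 : (1+qA-qB) ≠ 0 := ne_of_gt hD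
    have h1 : qA^2 - 1*(1-qB)^2 = (qA - (1-qB))*(1+qA-qB) := by ring
    rw [h1, one_mul, div_eq_div_iff (mul_ne_zero hne hne2) hne2]
    ring
  have hA : Tendsto (fun N : ℕ => qA * sigmaStar N qA qB w) atTop
      (nhds (qA / (1 + qA - qB))) := by
    have h := (tendsto_const_nhds : Filter.Tendsto (fun _ : ℕ => qA) Filter.atTop (nhds qA)).mul hσ
    have hv : qA * ((qA - 1*(1-qB))/(qA^2 - 1*(1-qB)^2)) = qA / (1+qA-qB) := by
      rw [hval]; ring
    rwa [hv] at h
  have hB : Tendsto (fun N : ℕ => 1 - (1 - qB) * sigmaStar N qA qB w) atTop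
      (nhds (1 - (1 - qB) / (1 + qA - qB))) := by
    have h := (tendsto_const_nhds : Filter.Tendsto (fun _ : ℕ => (1:ℝ)) Filter.atTop (nhds 1)).sub
      ((tendsto_const_nhds : Filter.Tendsto (fun _ : ℕ => 1 - qB) Filter.atTop (nhds (1 - qB))).mul hσ)
    have hv : (1:ℝ) - (1-qB) * ((qA - 1*(1-qB))/(qA^2 - 1*(1-qB)^2))
        = 1 - (1-qB) / (1+qA-qB) := by
      rw [hval]; ring
    rwa [hv] at h
  have hA2 : 1 / 2 < qA / (1 + qA - qB) := by
    rw [div_lt_div_iff₀ two_pos hD]; linarith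
  have hB2 : 1 / 2 < 1 - (1 - qB) / (1 + qA - qB) := by
    have : (1 - qB) / (1 + qA - qB) < 1/2 := by
      rw [div_lt_div_iff₀ hD two_pos]; linarith
    linarith
  have hA3 : qA / (1 + qA - qB) < 1 := by
    rw [div_lt_one hD]; linarith
  have hB3 : 1 - (1 - qB) / (1 + qA - qB) < 1 := by
    have : 0 < (1 - qB) / (1 + qA - qB) := div_pos (by linarith) hD
    linarith
  exact ⟨hA, hA2, hB, hB2, majProb_tendsto_one hA2 hA3 hA,
    majProb_tendsto_one hB2 hB3 hB⟩
end

section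
/- Let (p_N)_{N≥1} be a sequence in (1/2, 1) and p_∞ ∈ (1/2, 1) such that sup_N N·|p_N − p_∞| < ∞. Then the probability of a wrong majority decision satisfies P[ Binom(2N+1, p_N) ≤ N ] = Θ( (4 p_∞ (1 − p_∞))^N / √N ): there exist constants 0 < a ≤ b and an integer N₀ such that for all N ≥ N₀, a·(4 p_∞(1−p_∞))^N / √N ≤ P[ Binom(2N+1, p_N) ≤ N ] ≤ b·(4 p_∞(1−p_∞))^N / √N. -/
/-!
For `q > 1/2` the terms of the lower tail of `Binom(2N+1, q)` grow geometrically, with ratio at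
least `q / (1 - q)`, up to the last one `C(2N+1, N) q^N (1-q)^(N+1)`; so the tail is that term up to
a factor in `[1, q / (2q - 1)]`. The elementary bounds `4^N / (2√N) ≤ C(2N, N) ≤ 4^N / √N` turn it
into `(4q(1-q))^N / √N` up to bounded factors. Finally `N |p_N - p_∞| ≤ C` keeps
`(4 p_N (1 - p_N))^N / (4 p_∞ (1 - p_∞))^N` between two positive constants, since
`(1 + x / N)^N ≤ exp x`.
-/

/-- `P[Binom(2N+1, p) ≤ N]`: the probability of a wrong majority decision when each of the
`2N+1` votes is correct with probability `p`. -/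
noncomputable def lowTail (N : ℕ) (p : ℝ) : ℝ :=
  ∑ j ∈ Finset.range (N + 1),
    (Nat.choose (2 * N + 1) j : ℝ) * p ^ j * (1 - p) ^ (2 * N + 1 - j)

open Finset Filter Topology Real

namespace Nat

theorem two_mul_add_one_mul_centralBinom_sq_le (n : ℕ) :
    (2 * n + 1) * centralBinom n ^ 2 ≤ 16 ^ n := by
  induction n with
  | zero => simp
  | succ n ih =>
    have h := succ_mul_centralBinom_succ n
    have : (n + 1) ^ 2 * ((2 * (n + 1) + 1) * centralBinom (n + 1) ^ 2) ≤
        (n + 1) ^ 2 * 16 ^ (n + 1) :=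
      calc (n + 1) ^ 2 * ((2 * (n + 1) + 1) * centralBinom (n + 1) ^ 2)
          = (2 * n + 3) * (4 * (2 * n + 1)) * ((2 * n + 1) * centralBinom n ^ 2) := by
            rw [← mul_assoc, mul_comm _ (2 * (n + 1) + 1), mul_assoc, ← mul_pow, h]; ring
        _ ≤ (2 * n + 3) * (4 * (2 * n + 1)) * 16 ^ n := Nat.mul_le_mul_left _ ih
        _ ≤ 16 * (n + 1) ^ 2 * 16 ^ n := Nat.mul_le_mul_right _ (by nlinarith)
        _ = (n + 1) ^ 2 * 16 ^ (n + 1) := by ring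
    exact Nat.le_of_mul_le_mul_left this (by positivity)

theorem sixteen_pow_le_four_mul_mul_centralBinom_sq {n : ℕ} (hn : n ≠ 0) :
    16 ^ n ≤ 4 * n * centralBinom n ^ 2 := by
  induction n with
  | zero => exact absurd rfl hn
  | succ n ih =>
    rcases eq_or_ne n 0 with rfl | hn0
    · decide
    have h := succ_mul_centralBinom_succ n
    have : (n + 1) * 16 ^ (n + 1) ≤ (n + 1) * (4 * (n + 1) * centralBinom (n + 1) ^ 2) :=
      calc (n + 1) * 16 ^ (n + 1) = 16 * (n + 1) * 16 ^ n := by ring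
        _ ≤ 16 * (n + 1) * (4 * n * centralBinom n ^ 2) := Nat.mul_le_mul_left _ (ih hn0)
        _ ≤ 4 * (2 * (2 * n + 1) * centralBinom n) ^ 2 := by nlinarith
        _ = (n + 1) * (4 * (n + 1) * centralBinom (n + 1) ^ 2) := by rw [← h]; ring
    exact Nat.le_of_mul_le_mul_left this (by positivity)

theorem centralBinom_le_choose_two_mul_add_one (n : ℕ) : centralBinom n ≤ (2 * n + 1).choose n :=
  choose_le_choose n (le_succ _)

theorem choose_two_mul_add_one_le_two_mul_centralBinom (n : ℕ) :
    (2 * n + 1).choose n ≤ 2 * centralBinom n := by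
  cases n with
  | zero => decide
  | succ n =>
    rw [choose_succ_succ', two_mul (centralBinom _)]
    exact Nat.add_le_add (choose_le_centralBinom _ _) (choose_le_centralBinom _ _)

theorem centralBinom_le_four_pow_div_sqrt {n : ℕ} (hn : n ≠ 0) :
    (n.centralBinom : ℝ) ≤ 4 ^ n / √n := by
  have h : (2 * n + 1) * (n.centralBinom : ℝ) ^ 2 ≤ 16 ^ n := by
    exact_mod_cast n.two_mul_add_one_mul_centralBinom_sq_le
  rw [le_div_iff₀ (by positivity), ← pow_le_pow_iff_left₀ (by positivity) (by positivity)
    two_ne_zero, mul_pow, sq_sqrt n.cast_nonneg, ← pow_mul, mul_comm n 2, pow_mul]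
  norm_num
  nlinarith [sq_nonneg (n.centralBinom : ℝ)]

theorem four_pow_div_sqrt_le_two_mul_centralBinom {n : ℕ} (hn : n ≠ 0) :
    4 ^ n / √n ≤ 2 * (n.centralBinom : ℝ) := by
  have h : (16 : ℝ) ^ n ≤ 4 * n * n.centralBinom ^ 2 := by
    exact_mod_cast sixteen_pow_le_four_mul_mul_centralBinom_sq hn
  rw [div_le_iff₀ (by positivity), ← pow_le_pow_iff_left₀ (by positivity) (by positivity)
    two_ne_zero, mul_pow, mul_pow, sq_sqrt n.cast_nonneg, ← pow_mul, mul_comm n 2, pow_mul]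
  norm_num
  linarith

end Nat

theorem sum_range_succ_le_div_one_sub {t : ℕ → ℝ} {r : ℝ} (ht0 : 0 ≤ t 0) (hr0 : 0 ≤ r)
    (hr1 : r < 1) {N : ℕ} (ht : ∀ j < N, t j ≤ r * t (j + 1)) :
    ∑ j ∈ range (N + 1), t j ≤ t N / (1 - r) := by
  induction N with
  | zero =>
    rw [sum_range_one, le_div_iff₀ (by linarith)]
    nlinarith
  | succ N ih =>
    have ih := ih fun j hj => ht j (hj.trans N.lt_succ_self)
    calc ∑ j ∈ range (N + 2), t j ≤ r * t (N + 1) / (1 - r) + t (N + 1) := by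
          rw [sum_range_succ]
          gcongr
          exact ih.trans (div_le_div_of_nonneg_right (ht N N.lt_succ_self) (by linarith))
      _ = t (N + 1) / (1 - r) := by field_simp [show 1 - r ≠ 0 by linarith]; ring

theorem choose_mul_pow_mul_pow_le_lowTail (N : ℕ) {q : ℝ} (hq0 : 0 ≤ q) (hq1 : q ≤ 1) :
    ((2 * N + 1).choose N : ℝ) * q ^ N * (1 - q) ^ (N + 1) ≤ lowTail N q := by
  have h1q : 0 ≤ 1 - q := by linarith
  have hterm := single_le_sum
    (f := fun j => ((2 * N + 1).choose j : ℝ) * q ^ j * (1 - q) ^ (2 * N + 1 - j))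
    (fun j _ => by positivity) (self_mem_range_succ N)
  rwa [show 2 * N + 1 - N = N + 1 by omega] at hterm

theorem lowTail_le_choose_mul_pow_mul_pow (N : ℕ) {q : ℝ} (hq : 1 / 2 < q) (hq1 : q ≤ 1) :
    lowTail N q ≤ ((2 * N + 1).choose N : ℝ) * q ^ N * (1 - q) ^ (N + 1) * (q / (2 * q - 1)) := by
  have hq0 : 0 < q := by linarith
  have h1q : 0 ≤ 1 - q := by linarith
  set r := (1 - q) / q
  have hratio : ∀ j < N, ((2 * N + 1).choose j : ℝ) * q ^ j * (1 - q) ^ (2 * N + 1 - j) ≤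
      r * (((2 * N + 1).choose (j + 1) : ℝ) * q ^ (j + 1) * (1 - q) ^ (2 * N + 1 - (j + 1))) := by
    intro j hj
    have hchoose : ((2 * N + 1).choose j : ℝ) ≤ (2 * N + 1).choose (j + 1) := by
      exact_mod_cast Nat.choose_le_succ_of_lt_half_left (by omega)
    rw [show 2 * N + 1 - j = 2 * N + 1 - (j + 1) + 1 by omega]
    calc _ ≤ ((2 * N + 1).choose (j + 1) : ℝ) * q ^ j * (1 - q) ^ (2 * N + 1 - (j + 1) + 1) := by
          gcongr
      _ = _ := by simp only [r]; field_simp; ring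
  have hsum := sum_range_succ_le_div_one_sub (by positivity) (by positivity)
    (by rw [div_lt_one hq0]; linarith) hratio
  rw [show 2 * N + 1 - N = N + 1 by omega] at hsum
  refine hsum.trans_eq ?_
  have : 2 * q - 1 ≠ 0 := by linarith
  simp only [r]
  field_simp
  ring

theorem four_mul_mul_one_sub_pow_mul_div_le_lowTail {N : ℕ} (hN : N ≠ 0) {q : ℝ} (hq0 : 0 ≤ q)
    (hq1 : q ≤ 1) : (4 * q * (1 - q)) ^ N * (1 - q) / (2 * √N) ≤ lowTail N q := by
  have h1q : 0 ≤ 1 - q := by linarith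
  have hchoose : 4 ^ N / (2 * √N) ≤ ((2 * N + 1).choose N : ℝ) :=
    calc 4 ^ N / (2 * √N) = 4 ^ N / √N / 2 := by ring
      _ ≤ N.centralBinom := by linarith [Nat.four_pow_div_sqrt_le_two_mul_centralBinom hN]
      _ ≤ (2 * N + 1).choose N := by exact_mod_cast N.centralBinom_le_choose_two_mul_add_one
  calc (4 * q * (1 - q)) ^ N * (1 - q) / (2 * √N)
      = 4 ^ N / (2 * √N) * q ^ N * (1 - q) ^ (N + 1) := by rw [mul_pow, mul_pow]; ring
    _ ≤ ((2 * N + 1).choose N : ℝ) * q ^ N * (1 - q) ^ (N + 1) := by gcongr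
    _ ≤ lowTail N q := choose_mul_pow_mul_pow_le_lowTail N hq0 hq1

theorem lowTail_le_four_mul_mul_one_sub_pow_div {N : ℕ} (hN : N ≠ 0) {q : ℝ} (hq : 1 / 2 < q)
    (hq1 : q ≤ 1) : lowTail N q ≤ (4 * q * (1 - q)) ^ N / (2 * (2 * q - 1) * √N) := by
  have h1q : 0 ≤ 1 - q := by linarith
  have h2q : 0 < 2 * q - 1 := by linarith
  have hchoose : ((2 * N + 1).choose N : ℝ) ≤ 2 * (4 ^ N / √N) := by
    have := Nat.centralBinom_le_four_pow_div_sqrt hN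
    have : ((2 * N + 1).choose N : ℝ) ≤ 2 * N.centralBinom := by
      exact_mod_cast N.choose_two_mul_add_one_le_two_mul_centralBinom
    linarith
  calc lowTail N q ≤ ((2 * N + 1).choose N : ℝ) * q ^ N * (1 - q) ^ (N + 1) * (q / (2 * q - 1)) :=
        lowTail_le_choose_mul_pow_mul_pow N hq hq1
    _ ≤ 2 * (4 ^ N / √N) * q ^ N * (1 - q) ^ (N + 1) * (q / (2 * q - 1)) := by gcongr
    _ = (4 * q * (1 - q)) * ((4 * q * (1 - q)) ^ N / (2 * (2 * q - 1) * √N)) := by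
        rw [mul_pow, mul_pow]; field_simp; ring
    _ ≤ (4 * q * (1 - q)) ^ N / (2 * (2 * q - 1) * √N) :=
        mul_le_of_le_one_left (by positivity) (by nlinarith [sq_nonneg (2 * q - 1)])

theorem pow_le_pow_mul_exp_div {a b c : ℝ} {n : ℕ} (ha : 0 < a) (hb : 0 ≤ b) (hc : 0 ≤ c)
    (h : b ≤ a + c / n) : b ^ n ≤ a ^ n * exp (c / a) := by
  have hb' : b ≤ a * exp (c / (a * n)) := by
    have := add_one_le_exp (c / (a * n))
    calc b ≤ a * (c / (a * n) + 1) := by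
          rcases eq_or_ne (n : ℝ) 0 with hn | hn
          · simp_all
          · rw [mul_add, mul_div_assoc', mul_div_mul_left _ _ ha.ne']; linarith
      _ ≤ a * exp (c / (a * n)) := by gcongr
  calc b ^ n ≤ (a * exp (c / (a * n))) ^ n := pow_le_pow_left₀ hb hb' n
    _ = a ^ n * exp (n * (c / (a * n))) := by rw [mul_pow, ← exp_nat_mul]
    _ ≤ a ^ n * exp (c / a) := by
        gcongr
        rcases eq_or_ne (n : ℝ) 0 with hn | hn
        · rw [hn, zero_mul]; positivity
        · rw [mul_div_assoc', mul_comm a, ← div_div, mul_div_cancel_left₀ _ hn]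

theorem abs_four_mul_mul_one_sub_sub_le {p q : ℝ} (hp : p ∈ Set.Icc 0 1) (hq : q ∈ Set.Icc 0 1) :
    |4 * q * (1 - q) - 4 * p * (1 - p)| ≤ 4 * |q - p| := by
  rw [show 4 * q * (1 - q) - 4 * p * (1 - p) = 4 * (q - p) * (1 - q - p) by ring, abs_mul,
    abs_mul, abs_of_pos four_pos]
  exact mul_le_of_le_one_right (by positivity)
    (abs_le.2 ⟨by linarith [hp.2, hq.2], by linarith [hp.1, hq.1]⟩)

theorem tendsto_of_forall_mul_abs_sub_le {u : ℕ → ℝ} {l C : ℝ}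
    (h : ∀ N : ℕ, 1 ≤ N → (N : ℝ) * |u N - l| ≤ C) : Tendsto u atTop (𝓝 l) := by
  rw [tendsto_iff_norm_sub_tendsto_zero]
  refine squeeze_zero' (Eventually.of_forall fun N => norm_nonneg _) ?_
    (tendsto_const_div_atTop_nhds_zero_nat C)
  filter_upwards [eventually_ge_atTop 1] with N hN
  rw [le_div_iff₀ (by exact_mod_cast hN), mul_comm]
  exact h N hN

theorem exp_mul_div_two_mul_pow_div_le_lowTail {N : ℕ} (hN : N ≠ 0) {q Q c ε : ℝ} (hQ : 0 < Q)
    (hc : 0 ≤ c) (hε : 0 ≤ ε) (hq0 : 0 ≤ q) (hεq : ε ≤ 1 - q) (hfQ : Q / 2 ≤ 4 * q * (1 - q))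
    (hclose : Q ≤ 4 * q * (1 - q) + c / N) :
    exp (-(2 * c / Q)) * ε / 2 * Q ^ N / √N ≤ lowTail N q := by
  have hf0 : 0 < 4 * q * (1 - q) := by linarith
  have hpow : exp (-(2 * c / Q)) * Q ^ N ≤ (4 * q * (1 - q)) ^ N := by
    rw [exp_neg, inv_mul_eq_div, div_le_iff₀ (exp_pos _)]
    refine (pow_le_pow_mul_exp_div hf0 hQ.le hc hclose).trans ?_
    gcongr _ * exp ?_
    rw [div_le_div_iff₀ hf0 hQ]
    nlinarith
  calc exp (-(2 * c / Q)) * ε / 2 * Q ^ N / √N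
      = exp (-(2 * c / Q)) * Q ^ N * ε / (2 * √N) := by ring
    _ ≤ (4 * q * (1 - q)) ^ N * (1 - q) / (2 * √N) := by gcongr
    _ ≤ lowTail N q := four_mul_mul_one_sub_pow_mul_div_le_lowTail hN hq0 (by linarith)

theorem lowTail_le_exp_div_two_mul_pow_div {N : ℕ} (hN : N ≠ 0) {q Q c δ : ℝ} (hQ : 0 < Q)
    (hc : 0 ≤ c) (hδ : 0 < δ) (hδq : δ ≤ 2 * q - 1) (hq1 : q ≤ 1)
    (hclose : 4 * q * (1 - q) ≤ Q + c / N) :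
    lowTail N q ≤ exp (c / Q) / (2 * δ) * Q ^ N / √N := by
  calc lowTail N q ≤ (4 * q * (1 - q)) ^ N / (2 * (2 * q - 1) * √N) :=
        lowTail_le_four_mul_mul_one_sub_pow_div hN (by linarith) hq1
    _ ≤ Q ^ N * exp (c / Q) / (2 * δ * √N) := by
        gcongr
        exact pow_le_pow_mul_exp_div hQ (by nlinarith) hc hclose
    _ = exp (c / Q) / (2 * δ) * Q ^ N / √N := by field_simp

theorem wrong_majority_rate_general (p : ℕ → ℝ) (pinf : ℝ)
    (hpinf : pinf ∈ Set.Ioo (1 / 2 : ℝ) 1)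
    (hrate : ∃ C : ℝ, ∀ N : ℕ, 1 ≤ N → (N : ℝ) * |p N - pinf| ≤ C) :
    ∃ a b : ℝ, ∃ N₀ : ℕ, 0 < a ∧ a ≤ b ∧ ∀ N : ℕ, N₀ ≤ N →
      a * (4 * pinf * (1 - pinf)) ^ N / Real.sqrt N ≤ lowTail N (p N) ∧
      lowTail N (p N) ≤ b * (4 * pinf * (1 - pinf)) ^ N / Real.sqrt N := by
  obtain ⟨hpinf0, hpinf1⟩ := hpinf
  obtain ⟨C, hC⟩ := hrate
  set Q := 4 * pinf * (1 - pinf)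
  have hQ : 0 < Q := by nlinarith
  have hC0 : 0 ≤ C := (by positivity : (0 : ℝ) ≤ ((1 : ℕ) : ℝ) * |p 1 - pinf|).trans (hC 1 le_rfl)
  have hlim := tendsto_of_forall_mul_abs_sub_le hC
  have hflim : Tendsto (fun N => 4 * p N * (1 - p N)) atTop (𝓝 Q) :=
    (hlim.const_mul 4).mul (tendsto_const_nhds.sub hlim)
  -- on this window `1 - p N ≥ (1 - pinf) / 2` and `2 * p N - 1 ≥ (2 * pinf - 1) / 2`
  obtain ⟨N₀, hN₀⟩ := eventually_atTop.1 <| (eventually_ge_atTop 1).and <|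
    (hlim.eventually_mem (Ioo_mem_nhds (by linarith : (2 * pinf + 1) / 4 < pinf)
      (by linarith : pinf < (pinf + 1) / 2))).and (hflim.eventually_const_le (half_lt_self hQ))
  set a := exp (-(2 * (4 * C) / Q)) * ((1 - pinf) / 2) / 2
  refine ⟨a, max (exp (4 * C / Q) / (2 * ((2 * pinf - 1) / 2))) a, N₀,
    by have := sub_pos.2 hpinf1; positivity, le_max_right _ _, fun N hN => ?_⟩
  obtain ⟨hN1, ⟨hq_lo, hq_hi⟩, hfQ⟩ := hN₀ N hN
  have hclose : |4 * p N * (1 - p N) - Q| ≤ 4 * C / N := by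
    refine (abs_four_mul_mul_one_sub_sub_le ⟨by linarith, by linarith⟩
      ⟨by linarith, by linarith⟩).trans ?_
    rw [mul_div_assoc]
    gcongr
    rw [le_div_iff₀ (Nat.cast_pos.2 hN1), mul_comm]
    exact hC N hN1
  obtain ⟨hclose_lo, hclose_hi⟩ := abs_le.1 hclose
  constructor
  · exact exp_mul_div_two_mul_pow_div_le_lowTail (c := 4 * C) (ε := (1 - pinf) / 2) (by omega) hQ
      (by positivity) (by linarith) (by linarith) (by linarith) hfQ (by linarith)
  · refine (lowTail_le_exp_div_two_mul_pow_div (c := 4 * C) (δ := (2 * pinf - 1) / 2) (by omega)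
      hQ (by positivity) (by linarith) (by linarith) (by linarith) (by linarith)).trans ?_
    gcongr
    exact le_max_left _ _

/-- **Proposition 3** (rate of convergence of welfare): if `p_N ∈ (1/2,1)` with
`sup_N N·|p_N − p_∞| < ∞` and `p_∞ ∈ (1/2,1)`, then
`P[Binom(2N+1, p_N) ≤ N] = Θ((4 p_∞ (1−p_∞))^N / √N)`. -/
theorem wrong_majority_rate (p : ℕ → ℝ) (pinf : ℝ)
    (hpinf : pinf ∈ Set.Ioo (1 / 2 : ℝ) 1)
    (hp : ∀ N : ℕ, 1 ≤ N → p N ∈ Set.Ioo (1 / 2 : ℝ) 1)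
    (hrate : ∃ C : ℝ, ∀ N : ℕ, 1 ≤ N → (N : ℝ) * |p N - pinf| ≤ C) :
    ∃ a b : ℝ, ∃ N₀ : ℕ, 0 < a ∧ a ≤ b ∧ ∀ N : ℕ, N₀ ≤ N →
      a * (4 * pinf * (1 - pinf)) ^ N / Real.sqrt N ≤ lowTail N (p N) ∧
      lowTail N (p N) ≤ b * (4 * pinf * (1 - pinf)) ^ N / Real.sqrt N :=
  wrong_majority_rate_general p pinf hpinf hrate
end

section
/- Fix p ∈ (1/2, 1) and w ∈ [0, 1/2), let r = (1−p)/p ∈ (0,1), L = −log(1−2w)/(log p − log(1−p)) ≥ 0, and k*(w) = ⌊L⌋ + 2. Then for every integer k, the motivated belief of an agent with an a-signal that A is the better state is below one half, i.e. w + (1−w)·1/(1 + r^{k+1}) < 1/2, if and only if k ≤ −k*(w). -/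
/-- The cascade threshold `k*(w) = ⌊ −log(1−2w)/(log p − log(1−p)) ⌋ + 2`. -/
noncomputable def kstar (p w : ℝ) : ℤ :=
  ⌊-Real.log (1 - 2 * w) / (Real.log p - Real.log (1 - p))⌋ + 2

/-- An agent with an `a`-signal and inferred signal imbalance `k` holds motivated belief
`w + (1−w)/(1 + r^{k+1})` that `A` is better, where `r = (1−p)/p ∈ (0,1)` and
`L = −log(1−2w)/(log p − log(1−p)) ≥ 0`. This belief is below `1/2` iff `k ≤ −k*(w)`. -/
theorem motivated_belief_below_half_iff (p w : ℝ)
    (hp : p ∈ Set.Ioo (1 / 2 : ℝ) 1) (hw0 : 0 ≤ w) (hw1 : w < 1 / 2) :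
    (0 < (1 - p) / p ∧ (1 - p) / p < 1) ∧
    0 ≤ -Real.log (1 - 2 * w) / (Real.log p - Real.log (1 - p)) ∧
    ∀ k : ℤ,
      w + (1 - w) * (1 / (1 + ((1 - p) / p) ^ (k + 1))) < 1 / 2 ↔ k ≤ -kstar p w := by
  obtain ⟨hp1, hp2⟩ := hp
  have hp0 : (0:ℝ) < p := by linarith
  have h1p : (0:ℝ) < 1 - p := by linarith
  have hr0 : 0 < (1 - p) / p := div_pos h1p hp0
  have hr1 : (1 - p) / p < 1 := (div_lt_one hp0).2 (by linarith)
  have hD : 0 < Real.log p - Real.log (1 - p) := by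
    have := Real.log_lt_log h1p (by linarith : 1 - p < p)
    linarith
  have hw2 : (0:ℝ) < 1 - 2 * w := by linarith
  have hlogw : Real.log (1 - 2 * w) ≤ 0 := Real.log_nonpos (by linarith) (by linarith)
  refine ⟨⟨hr0, hr1⟩, div_nonneg (by linarith) hD.le, ?_⟩
  intro k
  set r := (1 - p) / p with hr
  have hrpow : 0 < r ^ (k + 1) := zpow_pos hr0 _
  have hlogr : Real.log r = -(Real.log p - Real.log (1 - p)) := by
    rw [hr, Real.log_div (by linarith) (ne_of_gt hp0)]; ring
  have hden : 0 < 1 + r ^ (k + 1) := by linarith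
  have h1 : (w + (1 - w) * (1 / (1 + r ^ (k + 1))) < 1 / 2) ↔
      1 / (1 - 2 * w) < r ^ (k + 1) := by
    rw [div_lt_iff₀ hw2]
    constructor
    · intro h
      have h' := mul_lt_mul_of_pos_right h hden
      have hinv : (1 / (1 + r ^ (k + 1))) * (1 + r ^ (k + 1)) = 1 := by
        field_simp
      nlinarith
    · intro h
      have hinv : (1 / (1 + r ^ (k + 1))) * (1 + r ^ (k + 1)) = 1 := by
        field_simp
      have hipos : 0 < 1 / (1 + r ^ (k + 1)) := by positivity
      nlinarith
  rw [h1]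
  have h2 : 1 / (1 - 2 * w) < r ^ (k + 1) ↔
      Real.log (1 / (1 - 2 * w)) < Real.log (r ^ (k + 1)) := by
    rw [Real.log_lt_log_iff (by positivity) hrpow]
  rw [h2, Real.log_zpow, one_div, Real.log_inv, hlogr]
  have h3 : -Real.log (1 - 2 * w) < (k + 1 : ℤ) * -(Real.log p - Real.log (1 - p)) ↔
      -Real.log (1 - 2 * w) / (Real.log p - Real.log (1 - p)) < (-(k + 1) : ℤ) := by
    rw [div_lt_iff₀ hD]
    push_cast
    constructor <;> intro h <;> nlinarith
  rw [h3, ← Int.floor_lt]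
  unfold kstar
  omega
end

section
/- Fix p ∈ (1/2, 1). Define φ_k = p^k/(p^k + (1−p)^k) for integers k ≥ 1, k*(w) = ⌊ −log(1−2w)/(log p − log(1−p)) ⌋ + 2 for w ∈ [0,1/2), and the equilibrium welfare function W(w) = φ_{k*(w)} for w ∈ [0, 1/2) and W(w) = p for w ∈ [1/2, 1]. Then: (i) k ↦ φ_k is strictly increasing on the positive integers, with φ_1 = p and φ_k < 1 for all k; (ii) W is nondecreasing on [0, 1/2); (iii) W(w) > p for every w ∈ [0, 1/2); hence W drops discontinuously from a value strictly above p to p at w = 1/2. -/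
/-- The probability of cascading to the better restaurant with cascade threshold `k`:
`φ_k = p^k/(p^k + (1−p)^k)`. -/
noncomputable def phi (p : ℝ) (k : ℕ) : ℝ := p ^ k / (p ^ k + (1 - p) ^ k)

/-- Equilibrium welfare in the sequential social learning model: `φ_{k*(w)}` for `w < 1/2`
and `p` for `w ≥ 1/2`. -/
noncomputable def welfareSLM (p w : ℝ) : ℝ :=
  if w < 1 / 2 then phi p (kstar p w).toNat else p

lemma phi_strictMono (p : ℝ) (hp : p ∈ Set.Ioo (1 / 2 : ℝ) 1) {k k' : ℕ} (h : k < k') :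
    phi p k < phi p k' := by
  obtain ⟨hp1, hp2⟩ := hp
  have hp0 : 0 < p := by linarith
  have hq0 : 0 < 1 - p := by linarith
  have hqp : 1 - p < p := by linarith
  have hd1 : 0 < p ^ k + (1 - p) ^ k := by positivity
  have hd2 : 0 < p ^ k' + (1 - p) ^ k' := by positivity
  unfold phi
  rw [div_lt_div_iff₀ hd1 hd2]
  obtain ⟨d, rfl⟩ : ∃ d, k' = k + (d + 1) := ⟨k' - k - 1, by omega⟩
  have key : (1 - p) ^ (d + 1) < p ^ (d + 1) :=
    pow_lt_pow_left₀ hqp (le_of_lt hq0) (by omega)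
  have h1 : 0 < p ^ k := by positivity
  have h2 : 0 < (1 - p) ^ k := by positivity
  have : p ^ k * (1 - p) ^ k * (1 - p) ^ (d + 1) < p ^ k * (1 - p) ^ k * p ^ (d + 1) := by
    apply mul_lt_mul_of_pos_left key (by positivity)
  have e1 : p ^ (k + (d+1)) = p ^ k * p ^ (d+1) := pow_add p k (d+1)
  have e2 : (1 - p) ^ (k + (d+1)) = (1 - p) ^ k * (1 - p) ^ (d+1) := pow_add (1-p) k (d+1)
  rw [e1, e2]
  nlinarith [this]

lemma phi_mono (p : ℝ) (hp : p ∈ Set.Ioo (1 / 2 : ℝ) 1) {k k' : ℕ} (h : k ≤ k') :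
    phi p k ≤ phi p k' := by
  rcases eq_or_lt_of_le h with rfl | h
  · exact le_refl _
  · exact le_of_lt (phi_strictMono p hp h)

lemma phi_one (p : ℝ) (hp : p ∈ Set.Ioo (1 / 2 : ℝ) 1) : phi p 1 = p := by
  unfold phi
  simp

lemma kstar_ge_two (p w : ℝ) (hp : p ∈ Set.Ioo (1 / 2 : ℝ) 1) (hw0 : 0 ≤ w)
    (hw : w < 1 / 2) : 2 ≤ kstar p w := by
  obtain ⟨hp1, hp2⟩ := hp
  have hnum : 0 ≤ -Real.log (1 - 2 * w) := by
    have h1 : 1 - 2 * w ≤ 1 := by linarith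
    have := Real.log_nonpos (by linarith) h1
    linarith
  have hden : 0 < Real.log p - Real.log (1 - p) := by
    have := Real.log_lt_log (by linarith : (0:ℝ) < 1 - p) (by linarith : 1 - p < p)
    linarith
  have : (0:ℤ) ≤ ⌊-Real.log (1 - 2 * w) / (Real.log p - Real.log (1 - p))⌋ := by
    apply Int.floor_nonneg.mpr
    positivity
  unfold kstar
  omega

lemma kstar_le_kstar (p w w' : ℝ) (hp : p ∈ Set.Ioo (1 / 2 : ℝ) 1)
    (h : w ≤ w') (hw' : w' < 1 / 2) : kstar p w ≤ kstar p w' := by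
  obtain ⟨hp1, hp2⟩ := hp
  have hden : 0 < Real.log p - Real.log (1 - p) := by
    have := Real.log_lt_log (by linarith : (0:ℝ) < 1 - p) (by linarith : 1 - p < p)
    linarith
  have hlog : Real.log (1 - 2 * w') ≤ Real.log (1 - 2 * w) :=
    Real.log_le_log (by linarith) (by linarith)
  have key : -Real.log (1 - 2 * w) / (Real.log p - Real.log (1 - p)) ≤
      -Real.log (1 - 2 * w') / (Real.log p - Real.log (1 - p)) :=
    div_le_div_of_nonneg_right (by linarith) hden.le
  unfold kstar
  have := Int.floor_le_floor key
  omega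

/-- **Proposition 6** (welfare in the SLM): (i) `k ↦ φ_k` is strictly increasing on the
positive integers with `φ_1 = p` and `φ_k < 1`; (ii) welfare is nondecreasing on `[0,1/2)`;
(iii) welfare is strictly above `p` on `[0,1/2)`; hence welfare drops discontinuously to `p`
at `w = 1/2`. -/
theorem slm_welfare (p : ℝ) (hp : p ∈ Set.Ioo (1 / 2 : ℝ) 1) :
    (∀ k k' : ℕ, 1 ≤ k → k < k' → phi p k < phi p k') ∧
    phi p 1 = p ∧ (∀ k : ℕ, 1 ≤ k → phi p k < 1) ∧
    (∀ w w' : ℝ, 0 ≤ w → w ≤ w' → w' < 1 / 2 → welfareSLM p w ≤ welfareSLM p w') ∧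
    (∀ w : ℝ, 0 ≤ w → w < 1 / 2 → p < welfareSLM p w) := by
  obtain ⟨hp1, hp2⟩ := hp
  have hp' : p ∈ Set.Ioo (1 / 2 : ℝ) 1 := ⟨hp1, hp2⟩
  refine ⟨fun k k' _ h => phi_strictMono p hp' h, phi_one p hp', ?_, ?_, ?_⟩
  · intro k hk
    unfold phi
    have h1 : 0 < p ^ k := pow_pos (by linarith) k
    have h2 : 0 < (1 - p) ^ k := pow_pos (by linarith) k
    rw [div_lt_one (by linarith)]
    linarith
  · intro w w' hw0 hww hw'
    have hw : w < 1 / 2 := lt_of_le_of_lt hww hw'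
    rw [welfareSLM, welfareSLM, if_pos hw, if_pos hw']
    apply phi_mono p hp'
    have := kstar_le_kstar p w w' hp' hww hw'
    have h2 := kstar_ge_two p w hp' hw0 hw
    omega
  · intro w hw0 hw
    rw [welfareSLM, if_pos hw]
    have h2 := kstar_ge_two p w hp' hw0 hw
    have : phi p 1 < phi p (kstar p w).toNat := phi_strictMono p hp' (by omega)
    rw [phi_one p hp'] at this
    exact this
end

section
/- Fix p ∈ (1/2, 1) and an integer k ≥ 2. Let (X_i)_{i≥1} be i.i.d. with P(X_i = 1) = p and P(X_i = −1) = 1−p, K_n = Σ_{i=1}^n X_i with K_0 = 0, and τ = inf{ n ≥ 0 : |K_n| = k }. Then the tail probability of the cascade time satisfies P[τ > N] = Θ( λ^{N/2} ) with λ = 4p(1−p)·cos²(π/(2k)): there exist constants 0 < a ≤ b and an integer N₀ such that for all N ≥ N₀, a·λ^{N/2} ≤ P[τ > N] ≤ b·λ^{N/2}. -/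
/-!
The probability that the walk started at `x` avoids `±k` up to time `N` obeys the recursion of
the walk killed at `±k`. With `r = √((1-p)/p)`, the function `φ x = r ^ x * sin ((x + k) π / (2k))`
vanishes at `±k`, is positive strictly between, and is an eigenfunction of the killed step with
eigenvalue `ρ = 2 √(p(1-p)) cos (π / (2k))`: the factor `r ^ x` turns the biased walk into the
symmetric one, whose killed eigenfunction is the sine. The killed step is monotone and the
indicator of the interior is comparable with `φ` on `[-k, k]`, so the survival probability is
squeezed between constant multiples of `ρ ^ N = λ ^ (N / 2)`.
-/

open MeasureTheory ProbabilityTheory Real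

lemma ProbabilityTheory.iIndepFun.measure_inter_preimage_tail {Ω β : Type*}
    [MeasurableSpace Ω] [MeasurableSpace β] {μ : Measure Ω} {X : ℕ → Ω → β}
    (h : iIndepFun X μ) (hX : ∀ i, Measurable (X i)) (m : ℕ) {B : Set β} {A : Set (ℕ → β)}
    (hB : MeasurableSet B) (hA : MeasurableSet A) :
    μ (X m ⁻¹' B ∩ (fun ω i => X (i + (m + 1)) ω) ⁻¹' A) =
      μ (X m ⁻¹' B) * μ ((fun ω i => X (i + (m + 1)) ω) ⁻¹' A) := by
  let σ : ℕ → MeasurableSpace Ω := fun i => MeasurableSpace.comap (X i) inferInstance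
  have hindep : Indep (⨆ i ∈ ({m} : Set ℕ), σ i) (⨆ i ∈ Set.Ioi m, σ i) μ :=
    indep_iSup_of_disjoint (fun i => (hX i).comap_le) ((iIndepFun_iff_iIndep _ _ μ).mp h)
      (by simp)
  refine (Indep_iff _ _ μ).mp hindep _ _ ?_ ?_
  · exact le_iSup₂ (f := fun i (_ : i ∈ ({m} : Set ℕ)) => σ i) m rfl _ ⟨B, hB, rfl⟩
  · have htail : Measurable[⨆ i ∈ Set.Ioi m, σ i] fun ω i => X (i + (m + 1)) ω :=
      (@measurable_pi_iff _ _ _ (⨆ i ∈ Set.Ioi m, σ i) _ _).mpr fun i => Measurable.of_comap_le <|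
        le_iSup₂ (f := fun i (_ : i ∈ Set.Ioi m) => σ i) (i + (m + 1)) (by simp; omega)
    exact htail hA

namespace BiasedWalk

noncomputable def killedStep (p : ℝ) (k : ℕ) (g : ℤ → ℝ) (x : ℤ) : ℝ :=
  if |x| = k then 0 else p * g (x + 1) + (1 - p) * g (x - 1)

noncomputable def survival (p : ℝ) (k N : ℕ) : ℤ → ℝ :=
  (killedStep p k)^[N] fun x => if |x| = k then 0 else 1

noncomputable def eigenfun (p : ℝ) (k : ℕ) (x : ℤ) : ℝ :=
  √((1 - p) / p) ^ x * sin ((x + k) * (π / (2 * k)))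

noncomputable def rate (p : ℝ) (k : ℕ) : ℝ :=
  2 * √(p * (1 - p)) * cos (π / (2 * k))

variable {p : ℝ} {k : ℕ}

lemma killedStep_nonneg (hp₀ : 0 ≤ p) (hp₁ : p ≤ 1) {g : ℤ → ℝ} (hg : ∀ x, 0 ≤ g x) (x : ℤ) :
    0 ≤ killedStep p k g x := by
  unfold killedStep
  split_ifs
  · exact le_rfl
  · have := hg (x + 1); have := hg (x - 1); nlinarith

lemma killedStep_mono (hp₀ : 0 ≤ p) (hp₁ : p ≤ 1) {g h : ℤ → ℝ}
    (hgh : ∀ x : ℤ, |x| ≤ k → g x ≤ h x) {x : ℤ} (hx : |x| ≤ k) :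
    killedStep p k g x ≤ killedStep p k h x := by
  unfold killedStep
  split_ifs with hxk
  · exact le_rfl
  · obtain ⟨hl, hr⟩ := abs_lt.mp (lt_of_le_of_ne hx hxk)
    have := sub_nonneg.mpr hp₁
    gcongr <;> exact hgh _ (abs_le.mpr ⟨by omega, by omega⟩)

lemma killedStep_const_mul (c : ℝ) (g : ℤ → ℝ) (x : ℤ) :
    killedStep p k (fun y => c * g y) x = c * killedStep p k g x := by
  unfold killedStep
  split_ifs <;> ring

lemma survival_succ (N : ℕ) : survival p k (N + 1) = killedStep p k (survival p k N) := by
  rw [survival, survival, Function.iterate_succ']; rfl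

lemma survival_nonneg (hp₀ : 0 ≤ p) (hp₁ : p ≤ 1) (N : ℕ) (x : ℤ) : 0 ≤ survival p k N x := by
  induction N generalizing x with
  | zero => unfold survival; dsimp only [Function.iterate_zero, id]; split_ifs <;> norm_num
  | succ N ih => rw [survival_succ]; exact killedStep_nonneg hp₀ hp₁ ih x

lemma eigenfun_recurrence (hp₀ : 0 < p) (hp₁ : p < 1) (x : ℤ) :
    p * eigenfun p k (x + 1) + (1 - p) * eigenfun p k (x - 1) = rate p k * eigenfun p k x := by
  have hq : 0 < 1 - p := sub_pos.mpr hp₁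
  simp only [eigenfun, rate]
  set r := √((1 - p) / p)
  set s := √(p * (1 - p))
  set θ := π / (2 * k)
  have hr : 0 < r := sqrt_pos.mpr (div_pos hq hp₀)
  have hs : s ^ 2 = p * (1 - p) := sq_sqrt (by positivity)
  have hrs : r * s = 1 - p := by
    rw [← sqrt_mul (div_pos hq hp₀).le, show (1 - p) / p * (p * (1 - p)) = (1 - p) ^ 2 by
      field_simp, sqrt_sq hq.le]
  have hpr : p * r = s := by
    refine mul_right_cancel₀ (sqrt_pos.mpr (mul_pos hp₀ hq)).ne' ?_
    rw [mul_assoc, hrs, ← sq, hs]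
  have hqr : (1 - p) * r⁻¹ = s := by rw [← hrs]; field_simp
  rw [zpow_add_one₀ hr.ne', zpow_sub_one₀ hr.ne']
  push_cast
  rw [show ((x : ℝ) + 1 + k) * θ = (x + k) * θ + θ by ring,
    show ((x : ℝ) - 1 + k) * θ = (x + k) * θ - θ by ring, sin_add, sin_sub]
  linear_combination (r ^ x * (sin ((x + k) * θ) * cos θ + cos ((x + k) * θ) * sin θ)) * hpr +
    (r ^ x * (sin ((x + k) * θ) * cos θ - cos ((x + k) * θ) * sin θ)) * hqr

lemma eigenfun_of_abs_eq (hk : k ≠ 0) {x : ℤ} (hx : |x| = k) : eigenfun p k x = 0 := by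
  have hk' : (k : ℝ) ≠ 0 := Nat.cast_ne_zero.mpr hk
  rcases abs_eq (Int.natCast_nonneg k) |>.mp hx with rfl | rfl
  · rw [eigenfun, show ((k : ℤ) + (k : ℝ)) * (π / (2 * k)) = π by push_cast; field_simp; ring,
      sin_pi, mul_zero]
  · rw [eigenfun, show ((-(k : ℤ) : ℤ) + (k : ℝ)) * (π / (2 * k)) = 0 by push_cast; ring,
      sin_zero, mul_zero]

lemma eigenfun_zero (hk : k ≠ 0) : eigenfun p k 0 = 1 := by
  have hk' : (k : ℝ) ≠ 0 := Nat.cast_ne_zero.mpr hk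
  rw [eigenfun, zpow_zero, one_mul, Int.cast_zero, zero_add,
    show (k : ℝ) * (π / (2 * k)) = π / 2 by field_simp, sin_pi_div_two]

lemma eigenfun_pos (hp₀ : 0 < p) (hp₁ : p < 1) {x : ℤ} (hx : |x| < k) : 0 < eigenfun p k x := by
  have hk : (0 : ℝ) < k := by exact_mod_cast (abs_nonneg x).trans_lt hx
  obtain ⟨hl, hr⟩ := abs_lt.mp hx
  have hl' : -(k : ℝ) < x := by exact_mod_cast hl
  have hr' : (x : ℝ) < k := by exact_mod_cast hr
  refine mul_pos (zpow_pos (sqrt_pos.mpr (div_pos (sub_pos.mpr hp₁) hp₀)) x)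
    (sin_pos_of_pos_of_lt_pi (mul_pos (by linarith) (by positivity)) ?_)
  calc ((x : ℝ) + k) * (π / (2 * k)) < (2 * k) * (π / (2 * k)) := by gcongr; linarith
    _ = π := by field_simp

lemma rate_nonneg (hk : k ≠ 0) : 0 ≤ rate p k := by
  have hk' : (1 : ℝ) ≤ k := by exact_mod_cast Nat.one_le_iff_ne_zero.mpr hk
  refine mul_nonneg (by positivity) (cos_nonneg_of_mem_Icc ⟨?_, ?_⟩)
  · have : 0 ≤ π / (2 * k) := by positivity
    linarith [pi_pos]
  · rw [div_le_div_iff₀ (by positivity) two_pos]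
    nlinarith [pi_pos]

lemma killedStep_eigenfun (hp₀ : 0 < p) (hp₁ : p < 1) (hk : k ≠ 0) (x : ℤ) :
    killedStep p k (eigenfun p k) x = rate p k * eigenfun p k x := by
  unfold killedStep
  split_ifs with hx
  · rw [eigenfun_of_abs_eq hk hx, mul_zero]
  · exact eigenfun_recurrence hp₀ hp₁ x

lemma mul_rate_pow_mul_eigenfun_le_iterate (hp₀ : 0 < p) (hp₁ : p < 1) (hk : k ≠ 0)
    {c : ℝ} {g : ℤ → ℝ} (hg : ∀ x : ℤ, |x| ≤ k → c * eigenfun p k x ≤ g x) (N : ℕ) :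
    ∀ x : ℤ, |x| ≤ k → c * rate p k ^ N * eigenfun p k x ≤ (killedStep p k)^[N] g x := by
  induction N with
  | zero => simpa using hg
  | succ N ih =>
    intro x hx
    calc c * rate p k ^ (N + 1) * eigenfun p k x
        = killedStep p k (fun y => c * rate p k ^ N * eigenfun p k y) x := by
          rw [killedStep_const_mul, killedStep_eigenfun hp₀ hp₁ hk, pow_succ]; ring
      _ ≤ (killedStep p k)^[N + 1] g x := by
          rw [Function.iterate_succ_apply']
          exact killedStep_mono hp₀.le hp₁.le ih hx

lemma iterate_le_mul_rate_pow_mul_eigenfun (hp₀ : 0 < p) (hp₁ : p < 1) (hk : k ≠ 0)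
    {C : ℝ} {g : ℤ → ℝ} (hg : ∀ x : ℤ, |x| ≤ k → g x ≤ C * eigenfun p k x) (N : ℕ) :
    ∀ x : ℤ, |x| ≤ k → (killedStep p k)^[N] g x ≤ C * rate p k ^ N * eigenfun p k x := by
  induction N with
  | zero => simpa using hg
  | succ N ih =>
    intro x hx
    calc (killedStep p k)^[N + 1] g x
        ≤ killedStep p k (fun y => C * rate p k ^ N * eigenfun p k y) x := by
          rw [Function.iterate_succ_apply']
          exact killedStep_mono hp₀.le hp₁.le ih hx
      _ = C * rate p k ^ (N + 1) * eigenfun p k x := by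
          rw [killedStep_const_mul, killedStep_eigenfun hp₀ hp₁ hk, pow_succ]; ring

lemma exists_survival_bounds (hp₀ : 0 < p) (hp₁ : p < 1) (hk : k ≠ 0) :
    ∃ a b : ℝ, 0 < a ∧ ∀ N : ℕ,
      a * rate p k ^ N ≤ survival p k N 0 ∧ survival p k N 0 ≤ b * rate p k ^ N := by
  have hk₀ : (0 : ℤ) < k := by omega
  obtain ⟨x₀, -, hmax⟩ :=
    (Finset.Icc (-(k : ℤ)) k).exists_max_image (eigenfun p k) ⟨0, by simp⟩
  obtain ⟨x₁, hx₁, hmin⟩ :=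
    (Finset.Icc (-(k : ℤ) + 1) (k - 1)).exists_min_image (eigenfun p k) ⟨0, by simp; omega⟩
  have hpos₀ : 0 < eigenfun p k x₀ :=
    (eigenfun_pos hp₀ hp₁ (by simpa using hk₀)).trans_le (hmax 0 (by simp))
  have hpos₁ : 0 < eigenfun p k x₁ :=
    eigenfun_pos hp₀ hp₁ (abs_lt.mpr (by simp only [Finset.mem_Icc] at hx₁; omega))
  have hlower : ∀ x : ℤ, |x| ≤ k →
      (eigenfun p k x₀)⁻¹ * eigenfun p k x ≤ if |x| = k then 0 else 1 := by
    intro x hx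
    split_ifs with h
    · rw [eigenfun_of_abs_eq hk h, mul_zero]
    · rw [inv_mul_le_one₀ hpos₀]
      exact hmax x (Finset.mem_Icc.mpr (abs_le.mp hx))
  have hupper : ∀ x : ℤ, |x| ≤ k →
      (if |x| = k then 0 else 1) ≤ (eigenfun p k x₁)⁻¹ * eigenfun p k x := by
    intro x hx
    split_ifs with h
    · rw [eigenfun_of_abs_eq hk h, mul_zero]
    · rw [le_inv_mul_iff₀ hpos₁, mul_one]
      obtain ⟨hl, hr⟩ := abs_lt.mp (lt_of_le_of_ne hx h)
      exact hmin x (Finset.mem_Icc.mpr ⟨by omega, by omega⟩)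
  refine ⟨(eigenfun p k x₀)⁻¹, (eigenfun p k x₁)⁻¹, inv_pos.mpr hpos₀, fun N => ⟨?_, ?_⟩⟩
  · simpa [survival, eigenfun_zero hk] using
      mul_rate_pow_mul_eigenfun_le_iterate hp₀ hp₁ hk hlower N 0 (by simp)
  · simpa [survival, eigenfun_zero hk] using
      iterate_le_mul_rate_pow_mul_eigenfun hp₀ hp₁ hk hupper N 0 (by simp)

lemma rate_sq (hp₀ : 0 ≤ p) (hp₁ : p ≤ 1) :
    rate p k ^ 2 = 4 * p * (1 - p) * cos (π / (2 * k)) ^ 2 := by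
  rw [rate, mul_pow, mul_pow, sq_sqrt (mul_nonneg hp₀ (sub_nonneg.mpr hp₁))]
  ring

def avoidSet (k N : ℕ) (x : ℤ) : Set (ℕ → ℤ) :=
  {s | ∀ n ≤ N, |x + ∑ i ∈ Finset.range n, s i| ≠ k}

lemma measurableSet_avoidSet (N : ℕ) (x : ℤ) : MeasurableSet (avoidSet k N x) := by
  have : avoidSet k N x =
      ⋂ n ≤ N, (fun s : ℕ → ℤ => ∑ i ∈ Finset.range n, s i) ⁻¹' {z | |x + z| ≠ k} := by
    ext; simp [avoidSet]
  rw [this]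
  exact MeasurableSet.iInter fun n => MeasurableSet.iInter fun _ =>
    (Finset.measurable_sum _ fun i _ => measurable_pi_apply i) MeasurableSet.of_discrete

lemma mem_avoidSet_zero {x : ℤ} {s : ℕ → ℤ} : s ∈ avoidSet k 0 x ↔ |x| ≠ k := by
  simp [avoidSet]

lemma mem_avoidSet_succ {N : ℕ} {x : ℤ} {s : ℕ → ℤ} :
    s ∈ avoidSet k (N + 1) x ↔ |x| ≠ k ∧ (fun i => s (i + 1)) ∈ avoidSet k N (x + s 0) := by
  have hsum : ∀ n, x + ∑ i ∈ Finset.range (n + 1), s i =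
      x + s 0 + ∑ i ∈ Finset.range n, s (i + 1) := fun n => by
    rw [Finset.sum_range_succ']; ring
  constructor
  · intro h
    exact ⟨by simpa using h 0 N.succ.zero_le, fun n hn => hsum n ▸ h (n + 1) (by omega)⟩
  · rintro ⟨h₀, h⟩ (_ | n) hn
    · simpa using h₀
    · exact (hsum n).symm ▸ h n (by omega)

section Probability

variable {Ω : Type*} [MeasurableSpace Ω] {μ : Measure Ω} [IsProbabilityMeasure μ]

lemma measure_eq_inter_add_inter_of_pm_one (hp₀ : 0 ≤ p) {Y : Ω → ℤ} (hY : Measurable Y)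
    (hup : μ (Y ⁻¹' {1}) = ENNReal.ofReal p) (hdown : μ (Y ⁻¹' {-1}) = ENNReal.ofReal (1 - p))
    (E : Set Ω) : μ E = μ (E ∩ Y ⁻¹' {1}) + μ (E ∩ Y ⁻¹' {-1}) := by
  have hup_meas : MeasurableSet (Y ⁻¹' {1}) := hY (measurableSet_singleton 1)
  have hcompl : ((Y ⁻¹' {1})ᶜ : Set Ω) =ᵐ[μ] (Y ⁻¹' {-1} : Set Ω) := by
    refine (ae_eq_of_subset_of_measure_ge ?_ ?_
      (hY (measurableSet_singleton (-1))).nullMeasurableSet (measure_ne_top _ _)).symm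
    · intro ω h
      simp only [Set.mem_preimage, Set.mem_singleton_iff, Set.mem_compl_iff] at h ⊢
      omega
    · rw [prob_compl_eq_one_sub hup_meas, hup, hdown, ← ENNReal.ofReal_one,
        ENNReal.ofReal_sub _ hp₀]
  rw [← measure_inter_add_sdiff E hup_meas, Set.sdiff_eq,
    measure_congr ((Filter.EventuallyEq.refl _ E).inter hcompl)]

lemma measure_preimage_avoidSet (hp₀ : 0 ≤ p) (hp₁ : p ≤ 1) {X : ℕ → Ω → ℤ}
    (hX : ∀ i, Measurable (X i)) (hindep : iIndepFun X μ)
    (hup : ∀ i, μ (X i ⁻¹' {1}) = ENNReal.ofReal p)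
    (hdown : ∀ i, μ (X i ⁻¹' {-1}) = ENNReal.ofReal (1 - p)) (N m : ℕ) (x : ℤ) :
    μ ((fun ω i => X (i + m) ω) ⁻¹' avoidSet k N x) = ENNReal.ofReal (survival p k N x) := by
  induction N generalizing m x with
  | zero =>
    by_cases hx : |x| = k <;> simp [Set.preimage, mem_avoidSet_zero, hx, survival]
  | succ N ih =>
    by_cases hx : |x| = k
    · simp [Set.preimage, mem_avoidSet_succ, hx, survival_succ, killedStep]
    have hstep : ∀ c : ℤ, μ ((fun ω i => X (i + m) ω) ⁻¹' avoidSet k (N + 1) x ∩ X m ⁻¹' {c}) =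
        μ (X m ⁻¹' {c}) * ENNReal.ofReal (survival p k N (x + c)) := by
      intro c
      have hfirst : (fun ω i => X (i + m) ω) ⁻¹' avoidSet k (N + 1) x ∩ X m ⁻¹' {c} =
          X m ⁻¹' {c} ∩ (fun ω i => X (i + (m + 1)) ω) ⁻¹' avoidSet k N (x + c) := by
        ext ω
        have hshift : (fun i => X (i + 1 + m) ω) = fun i => X (i + (m + 1)) ω :=
          funext fun i => by rw [Nat.add_right_comm, Nat.add_assoc]
        simp only [Set.mem_inter_iff, Set.mem_preimage, mem_avoidSet_succ, Set.mem_singleton_iff,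
          zero_add, hshift]
        constructor
        · rintro ⟨⟨-, h⟩, rfl⟩
          exact ⟨rfl, h⟩
        · rintro ⟨rfl, h⟩
          exact ⟨⟨hx, h⟩, rfl⟩
      rw [hfirst, hindep.measure_inter_preimage_tail hX m (measurableSet_singleton c)
        (measurableSet_avoidSet N _), ih]
    rw [measure_eq_inter_add_inter_of_pm_one hp₀ (hX m) (hup m) (hdown m), hstep, hstep, hup, hdown,
      survival_succ, killedStep, if_neg hx, ← sub_eq_add_neg,
      ← ENNReal.ofReal_mul hp₀, ← ENNReal.ofReal_mul (sub_nonneg.mpr hp₁), ← ENNReal.ofReal_add]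
    · exact mul_nonneg hp₀ (survival_nonneg hp₀ hp₁ N _)
    · exact mul_nonneg (sub_nonneg.mpr hp₁) (survival_nonneg hp₀ hp₁ N _)

end Probability

end BiasedWalk

/-- **Proposition 7(i)** (rate of cascade onset): for the biased walk
`K_n = Σ_{i=1}^n X_i` with i.i.d. `±1` steps (`+1` with probability `p > 1/2`) and absorbing
boundaries `±k` (`k ≥ 2`), the tail probability of the cascade time `τ` satisfies
`P[τ > N] = Θ(λ^{N/2})` with `λ = 4p(1−p)·cos²(π/(2k))`. -/
theorem cascade_time_tail_rate {Ω : Type*} [MeasurableSpace Ω] (μ : Measure Ω)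
    [IsProbabilityMeasure μ] (p : ℝ) (hp : p ∈ Set.Ioo (1 / 2 : ℝ) 1)
    (k : ℕ) (hk : 2 ≤ k)
    (X : ℕ → Ω → ℤ) (hX : ∀ i, Measurable (X i))
    (hindep : iIndepFun X μ)
    (hup : ∀ i, μ {ω | X i ω = 1} = ENNReal.ofReal p)
    (hdown : ∀ i, μ {ω | X i ω = -1} = ENNReal.ofReal (1 - p)) :
    ∃ a b : ℝ, ∃ N₀ : ℕ, 0 < a ∧ a ≤ b ∧ ∀ N : ℕ, N₀ ≤ N →
      a * (4 * p * (1 - p) * Real.cos (π / (2 * k)) ^ 2) ^ ((N : ℝ) / 2) ≤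
        (μ {ω | ∀ n ≤ N, |∑ i ∈ Finset.range n, X (i + 1) ω| ≠ (k : ℤ)}).toReal ∧
      (μ {ω | ∀ n ≤ N, |∑ i ∈ Finset.range n, X (i + 1) ω| ≠ (k : ℤ)}).toReal ≤
        b * (4 * p * (1 - p) * Real.cos (π / (2 * k)) ^ 2) ^ ((N : ℝ) / 2) := by
  obtain ⟨hp₀, hp₁⟩ : 0 < p ∧ p < 1 := ⟨by linarith [hp.1], hp.2⟩
  have hk₀ : k ≠ 0 := by omega
  have hsurvival : ∀ N : ℕ,
      (μ {ω | ∀ n ≤ N, |∑ i ∈ Finset.range n, X (i + 1) ω| ≠ (k : ℤ)}).toReal =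
        BiasedWalk.survival p k N 0 := by
    intro N
    have hevent : {ω | ∀ n ≤ N, |∑ i ∈ Finset.range n, X (i + 1) ω| ≠ (k : ℤ)} =
        (fun ω i => X (i + 1) ω) ⁻¹' BiasedWalk.avoidSet k N 0 := by
      ext ω; simp [BiasedWalk.avoidSet]
    rw [hevent, BiasedWalk.measure_preimage_avoidSet hp₀.le hp₁.le hX hindep hup hdown,
      ENNReal.toReal_ofReal (BiasedWalk.survival_nonneg hp₀.le hp₁.le N 0)]
  have hrate : ∀ N : ℕ,
      (4 * p * (1 - p) * cos (π / (2 * k)) ^ 2) ^ ((N : ℝ) / 2) = BiasedWalk.rate p k ^ N := by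
    intro N
    rw [← BiasedWalk.rate_sq hp₀.le hp₁.le, ← rpow_natCast _ 2,
      ← rpow_mul (BiasedWalk.rate_nonneg hk₀), Nat.cast_ofNat, mul_div_cancel₀ _ two_ne_zero,
      rpow_natCast]
  obtain ⟨a, b, ha, hbounds⟩ := BiasedWalk.exists_survival_bounds hp₀ hp₁ hk₀
  refine ⟨a, b, 0, ha, ?_, fun N _ => ?_⟩
  · simpa using (hbounds 0).1.trans (hbounds 0).2
  · simpa only [hsurvival, hrate] using hbounds N
end

section
/- Fix p ∈ (1/2, 1) and an integer k ≥ 2. Let W_N(k) be the N-agent equilibrium welfare of the sequential social learning model with cascade threshold k, and let φ_k = p^k/(p^k + (1−p)^k). Then φ_k − W_N(k) = Θ(1/N): there exist constants 0 < a ≤ b and an integer N₀ such that for all N ≥ N₀, a/N ≤ φ_k − W_N(k) ≤ b/N. -/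
open MeasureTheory ProbabilityTheory

/-- The stopped signal-imbalance walk with absorbing boundaries `±k`. -/
def stoppedWalk {Ω : Type*} (X : ℕ → Ω → ℤ) (k : ℤ) : ℕ → Ω → ℤ
  | 0 => fun _ => 0
  | n + 1 => fun ω =>
      if |stoppedWalk X k n ω| < k then stoppedWalk X k n ω + X (n + 1) ω
      else stoppedWalk X k n ω

/-- Agent `n`'s choice (for `n ≥ 1`) under cascade threshold `k`. -/
def choice {Ω : Type*} (X : ℕ → Ω → ℤ) (k : ℤ) (n : ℕ) (ω : Ω) : ℤ :=
  if |stoppedWalk X k (n - 1) ω| < k then X n ω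
  else Int.sign (stoppedWalk X k (n - 1) ω)

/-- `N`-agent equilibrium welfare `W_N(k) = (1/N) · E[#{1 ≤ n ≤ N : ρ_n = +1}]`. -/
noncomputable def welfareN {Ω : Type*} [MeasurableSpace Ω] (μ : Measure Ω)
    (X : ℕ → Ω → ℤ) (k : ℤ) (N : ℕ) : ℝ :=
  (1 / (N : ℝ)) *
    ∫ ω, (((Finset.Icc 1 N).filter (fun n => choice X k n ω = 1)).card : ℝ) ∂μ


/-!
Write `K_n` for the stopped walk and `M_n = P(|K_n| < k)` for the probability that agent `n + 1`
is not in a cascade. Reflecting paths gives `P(K_n = -j) = ((1 - p) / p) ^ j * P(K_n = j)`, and at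
`j = k`, together with `M_n + P(K_n = k) + P(K_n = -k) = 1`, this yields
`P(K_n = k) = φ_k (1 - M_n)`. Hence `P(ρ_{n+1} = 1) = p M_n + φ_k (1 - M_n)` and
`φ_k - W_N(k) = (φ_k - p) (M_0 + ⋯ + M_{N-1}) / N`. Here `φ_k > p` because `k ≥ 2`, `M_0 = 1`,
and the walk drifts upward at rate `2p - 1` while unabsorbed without ever exceeding `k`, so
`(2p - 1) (M_0 + ⋯ + M_{N-1}) = E[K_N] ≤ k`.
-/

section Walk

variable {Ω : Type*} {X Y : ℕ → Ω → ℤ} {k : ℤ} {ω : Ω}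

lemma stoppedWalk_succ_of_lt {n : ℕ} (h : |stoppedWalk X k n ω| < k) :
    stoppedWalk X k (n + 1) ω = stoppedWalk X k n ω + X (n + 1) ω := by
  simp [stoppedWalk, h]

lemma stoppedWalk_succ_of_le {n : ℕ} (h : k ≤ |stoppedWalk X k n ω|) :
    stoppedWalk X k (n + 1) ω = stoppedWalk X k n ω := by
  simp [stoppedWalk, h.not_gt]

lemma abs_stoppedWalk_le (hk : 0 ≤ k) (hsign : ∀ i, X i ω = 1 ∨ X i ω = -1) :
    ∀ n, |stoppedWalk X k n ω| ≤ k
  | 0 => by simpa [stoppedWalk] using hk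
  | n + 1 => by
    rcases lt_or_ge |stoppedWalk X k n ω| k with h | h
    · rw [stoppedWalk_succ_of_lt h, abs_le]
      rw [abs_lt] at h
      rcases hsign (n + 1) with hx | hx <;> rw [hx] <;> omega
    · rw [stoppedWalk_succ_of_le h]
      exact abs_stoppedWalk_le hk hsign n

lemma stoppedWalk_congr (h : ∀ i, X i ω = Y i ω) :
    ∀ n, stoppedWalk X k n ω = stoppedWalk Y k n ω
  | 0 => rfl
  | n + 1 => by simp only [stoppedWalk, stoppedWalk_congr h n, h]

lemma choice_congr (h : ∀ i, X i ω = Y i ω) (n : ℕ) : choice X k n ω = choice Y k n ω := by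
  simp only [choice, stoppedWalk_congr h, h]

end Walk

section History

variable {Ω β : Type*} [MeasurableSpace β] {X : ℕ → Ω → β}

abbrev signalHistory (X : ℕ → Ω → β) (n : ℕ) : MeasurableSpace Ω :=
  ⨆ i ∈ Set.Iic n, MeasurableSpace.comap (X i) inferInstance

lemma signalHistory_mono {m n : ℕ} (h : m ≤ n) : signalHistory X m ≤ signalHistory X n :=
  biSup_mono fun _ hi => le_trans hi h

lemma measurable_signalHistory {i n : ℕ} (h : i ≤ n) : Measurable[signalHistory X n] (X i) :=
  Measurable.of_comap_le (le_biSup (fun i => MeasurableSpace.comap (X i) inferInstance) h)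

variable [MeasurableSpace Ω]

lemma signalHistory_le (hX : ∀ i, Measurable (X i)) (n : ℕ) :
    signalHistory X n ≤ ‹MeasurableSpace Ω› :=
  iSup₂_le fun i _ => (hX i).comap_le

lemma indep_signalHistory_succ {μ : Measure Ω} (hX : ∀ i, Measurable (X i))
    (hindep : iIndepFun X μ) (n : ℕ) :
    Indep (signalHistory X n) (MeasurableSpace.comap (X (n + 1)) inferInstance) μ := by
  have h := indep_iSup_of_disjoint (fun i => (hX i).comap_le)
    ((iIndepFun_iff_iIndep _ X μ).1 hindep) (S := Set.Iic n) (T := {n + 1}) (by simp)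
  show Indep (⨆ i ∈ Set.Iic n, _) _ μ
  simpa only [Set.mem_singleton_iff, iSup_iSup_eq_left] using h

end History

lemma measurable_stoppedWalk_signalHistory {Ω : Type*} [MeasurableSpace Ω] (X : ℕ → Ω → ℤ)
    (k : ℤ) : ∀ n, Measurable[signalHistory X n] (stoppedWalk X k n)
  | 0 => measurable_const
  | n + 1 => by
    have hK := (measurable_stoppedWalk_signalHistory X k n).mono
      (signalHistory_mono n.le_succ) le_rfl
    exact Measurable.ite (hK (MeasurableSet.of_discrete (s := {z : ℤ | |z| < k})))
      (hK.add (measurable_signalHistory le_rfl)) hK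

lemma measureReal_setOf_eq_and {Ω α : Type*} [MeasurableSpace Ω] (μ : Measure Ω) (f : Ω → α)
    (a : α) (Q : α → Prop) [Decidable (Q a)] :
    μ.real {ω | f ω = a ∧ Q (f ω)} = if Q a then μ.real {ω | f ω = a} else 0 := by
  split_ifs with h
  · congr 1
    ext ω
    simp only [Set.mem_ofPred_eq, and_iff_left_iff_imp]
    rintro rfl
    exact h
  · convert measureReal_empty (μ := μ)
    ext ω
    simp only [Set.mem_ofPred_eq, Set.mem_empty_iff_false, iff_false, not_and]
    rintro rfl
    exact h

lemma integral_card_filter {Ω ι : Type*} [MeasurableSpace Ω] (μ : Measure Ω) [IsFiniteMeasure μ]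
    (s : Finset ι) (P : ι → Ω → Prop) [∀ i ω, Decidable (P i ω)]
    (hP : ∀ i ∈ s, MeasurableSet {ω | P i ω}) :
    ∫ ω, ((s.filter (P · ω)).card : ℝ) ∂μ = ∑ i ∈ s, μ.real {ω | P i ω} := by
  have hcard (ω : Ω) :
      ((s.filter (P · ω)).card : ℝ) = ∑ i ∈ s, {ω | P i ω}.indicator (1 : Ω → ℝ) ω := by
    simp only [Finset.card_filter, Nat.cast_sum, Nat.cast_ite, Nat.cast_one, Nat.cast_zero,
      Set.indicator_apply, Set.mem_ofPred_eq, Pi.one_apply]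
  simp_rw [hcard]
  rw [integral_finsetSum _ fun i hi => (integrable_const 1).indicator (hP i hi)]
  exact Finset.sum_congr rfl fun i hi => integral_indicator_one (hP i hi)

/-- The signals lie in `{1, -1}` everywhere, not only almost surely; `ae_eq_toSign` and
`isSignalSeq_toSign` reduce the general case to this one. -/
structure IsSignalSeq {Ω : Type*} [MeasurableSpace Ω] (μ : Measure Ω) (X : ℕ → Ω → ℤ)
    (p : ℝ) : Prop where
  measurable : ∀ i, Measurable (X i)
  indep : iIndepFun X μ
  sign : ∀ i ω, X i ω = 1 ∨ X i ω = -1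
  measureReal_eq_one : ∀ i, μ.real {ω | X i ω = 1} = p

noncomputable def noCascadeProb {Ω : Type*} [MeasurableSpace Ω] (μ : Measure Ω)
    (X : ℕ → Ω → ℤ) (k : ℤ) (n : ℕ) : ℝ :=
  μ.real {ω | |stoppedWalk X k n ω| < k}

lemma one_le_sum_noCascadeProb {Ω : Type*} [MeasurableSpace Ω] (μ : Measure Ω)
    [IsProbabilityMeasure μ] (X : ℕ → Ω → ℤ) {k : ℤ} (hk : 0 < k) {N : ℕ} (hN : N ≠ 0) :
    1 ≤ ∑ n ∈ Finset.range N, noCascadeProb μ X k n := by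
  have h0 : noCascadeProb μ X k 0 = 1 := by simp [noCascadeProb, stoppedWalk, hk]
  rw [← h0]
  exact Finset.single_le_sum (f := noCascadeProb μ X k) (fun n _ => measureReal_nonneg)
    (Finset.mem_range.2 (Nat.pos_of_ne_zero hN))

namespace IsSignalSeq

variable {Ω : Type*} [MeasurableSpace Ω] {μ : Measure Ω} {X : ℕ → Ω → ℤ} {p : ℝ} {k : ℤ}

lemma measurable_stoppedWalk (hS : IsSignalSeq μ X p) (n : ℕ) :
    Measurable (stoppedWalk X k n) :=
  (measurable_stoppedWalk_signalHistory X k n).mono (signalHistory_le hS.measurable n) le_rfl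

lemma measurableSet_setOf_stoppedWalk (hS : IsSignalSeq μ X p) (n : ℕ) (P : ℤ → Prop) :
    MeasurableSet {ω | P (stoppedWalk X k n ω)} :=
  hS.measurable_stoppedWalk n .of_discrete

lemma measurable_choice (hS : IsSignalSeq μ X p) (n : ℕ) : Measurable (choice X k n) :=
  Measurable.ite (hS.measurableSet_setOf_stoppedWalk (n - 1) (|·| < k)) (hS.measurable n)
    ((measurable_from_top (f := Int.sign)).comp (hS.measurable_stoppedWalk (n - 1)))

lemma measureReal_inter_signal (hS : IsSignalSeq μ X p) {n : ℕ} {A : Set Ω}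
    (hA : MeasurableSet[signalHistory X n] A) (s : ℤ) :
    μ.real (A ∩ {ω | X (n + 1) ω = s}) = μ.real A * μ.real {ω | X (n + 1) ω = s} := by
  have h := (Indep_iff _ _ μ).1 (indep_signalHistory_succ hS.measurable hS.indep n) A
    {ω | X (n + 1) ω = s} hA ⟨{s}, measurableSet_singleton s, rfl⟩
  simp only [measureReal_def, h, ENNReal.toReal_mul]

lemma measureReal_stoppedWalk_inter_eq_one (hS : IsSignalSeq μ X p) (n : ℕ) (P : ℤ → Prop) :
    μ.real ({ω | P (stoppedWalk X k n ω)} ∩ {ω | X (n + 1) ω = 1}) =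
      p * μ.real {ω | P (stoppedWalk X k n ω)} := by
  rw [hS.measureReal_inter_signal (A := {ω | P (stoppedWalk X k n ω)})
    (measurable_stoppedWalk_signalHistory X k n .of_discrete), hS.measureReal_eq_one, mul_comm]

variable [IsProbabilityMeasure μ]

lemma measureReal_eq_neg_one (hS : IsSignalSeq μ X p) (i : ℕ) :
    μ.real {ω | X i ω = -1} = 1 - p := by
  have h : {ω | X i ω = -1} = {ω | X i ω = 1}ᶜ := by
    ext ω
    rcases hS.sign i ω with h | h <;> simp [h]
  rw [h, probReal_compl_eq_one_sub (s := {ω | X i ω = 1})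
    (hS.measurable i (measurableSet_singleton 1)), hS.measureReal_eq_one]

lemma measureReal_stoppedWalk_inter_eq_neg_one (hS : IsSignalSeq μ X p) (n : ℕ)
    (P : ℤ → Prop) :
    μ.real ({ω | P (stoppedWalk X k n ω)} ∩ {ω | X (n + 1) ω = -1}) =
      (1 - p) * μ.real {ω | P (stoppedWalk X k n ω)} := by
  rw [hS.measureReal_inter_signal (A := {ω | P (stoppedWalk X k n ω)})
    (measurable_stoppedWalk_signalHistory X k n .of_discrete), hS.measureReal_eq_neg_one,
    mul_comm]

lemma measureReal_stoppedWalk_succ (hS : IsSignalSeq μ X p) (n : ℕ) (j : ℤ) :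
    μ.real {ω | stoppedWalk X k (n + 1) ω = j} =
      (if |j - 1| < k then p * μ.real {ω | stoppedWalk X k n ω = j - 1} else 0) +
      (if |j + 1| < k then (1 - p) * μ.real {ω | stoppedWalk X k n ω = j + 1} else 0) +
      (if k ≤ |j| then μ.real {ω | stoppedWalk X k n ω = j} else 0) := by
  have hset : {ω | stoppedWalk X k (n + 1) ω = j} =
      ({ω | stoppedWalk X k n ω = j - 1 ∧ |stoppedWalk X k n ω| < k} ∩ {ω | X (n + 1) ω = 1}) ∪
      ({ω | stoppedWalk X k n ω = j + 1 ∧ |stoppedWalk X k n ω| < k} ∩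
        {ω | X (n + 1) ω = -1}) ∪
      {ω | stoppedWalk X k n ω = j ∧ k ≤ |stoppedWalk X k n ω|} := by
    ext ω
    simp only [Set.mem_ofPred_eq, Set.mem_union, Set.mem_inter_iff]
    rcases lt_or_ge |stoppedWalk X k n ω| k with h | h
    · rw [stoppedWalk_succ_of_lt h]
      rcases hS.sign (n + 1) ω with hx | hx <;> rw [hx] <;> omega
    · rw [stoppedWalk_succ_of_le h]
      omega
  rw [hset, measureReal_union, measureReal_union,
    hS.measureReal_stoppedWalk_inter_eq_one n (fun z => z = j - 1 ∧ |z| < k),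
    hS.measureReal_stoppedWalk_inter_eq_neg_one n (fun z => z = j + 1 ∧ |z| < k),
    measureReal_setOf_eq_and μ _ (j - 1) (|·| < k), measureReal_setOf_eq_and μ _ (j + 1) (|·| < k),
    measureReal_setOf_eq_and μ _ j (k ≤ |·|), mul_ite, mul_ite, mul_zero, mul_zero]
  · rw [Set.disjoint_left]
    rintro ω ⟨⟨h1, -⟩, -⟩ ⟨⟨h2, -⟩, -⟩
    omega
  · exact (hS.measurableSet_setOf_stoppedWalk n fun z => z = j + 1 ∧ |z| < k).inter
      (hS.measurable _ (measurableSet_singleton _))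
  · rw [Set.disjoint_left]
    rintro ω (⟨⟨h1, h1'⟩, -⟩ | ⟨⟨h1, h1'⟩, -⟩) ⟨h2, h2'⟩ <;> omega
  · exact hS.measurableSet_setOf_stoppedWalk n fun z => z = j ∧ k ≤ |z|

lemma measureReal_stoppedWalk_eq_neg (hS : IsSignalSeq μ X p) (hp : p ∈ Set.Ioo 0 1) (n : ℕ)
    (j : ℤ) :
    μ.real {ω | stoppedWalk X k n ω = -j} =
      ((1 - p) / p) ^ j * μ.real {ω | stoppedWalk X k n ω = j} := by
  induction n generalizing j with
  | zero =>
    by_cases hj : j = 0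
    · simp [hj]
    · have hj' : (0 : ℤ) ≠ -j := by omega
      simp [stoppedWalk, hj', Ne.symm hj]
  | succ n ih =>
    have hp0 : p ≠ 0 := hp.1.ne'
    have hq0 : 1 - p ≠ 0 := sub_ne_zero.2 hp.2.ne'
    have hr : (1 - p) / p ≠ 0 := div_ne_zero hq0 hp0
    have hup : p * ((1 - p) / p) ^ (j + 1) = ((1 - p) / p) ^ j * (1 - p) := by
      rw [zpow_add_one₀ hr]
      field_simp
    have hdown : (1 - p) * ((1 - p) / p) ^ (j - 1) = ((1 - p) / p) ^ j * p := by
      rw [zpow_sub_one₀ hr]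
      field_simp
    rw [hS.measureReal_stoppedWalk_succ, hS.measureReal_stoppedWalk_succ,
      show -j - 1 = -(j + 1) by ring, show -j + 1 = -(j - 1) by ring, abs_neg, abs_neg, abs_neg,
      ih, ih, ih]
    simp only [← mul_assoc, hup, hdown]
    split_ifs <;> ring

lemma noCascadeProb_add_measureReal_boundary (hS : IsSignalSeq μ X p) (hk : 0 < k) (n : ℕ) :
    noCascadeProb μ X k n + μ.real {ω | stoppedWalk X k n ω = k} +
      μ.real {ω | stoppedWalk X k n ω = -k} = 1 := by
  have hcover : {ω | |stoppedWalk X k n ω| < k} ∪ {ω | stoppedWalk X k n ω = k} ∪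
      {ω | stoppedWalk X k n ω = -k} = Set.univ := by
    refine Set.eq_univ_of_forall fun ω => ?_
    have h := abs_le.1 (abs_stoppedWalk_le hk.le (hS.sign · ω) n)
    simp only [Set.mem_union, Set.mem_ofPred_eq, abs_lt]
    omega
  rw [noCascadeProb, ← measureReal_union, ← measureReal_union, hcover, probReal_univ]
  · rw [Set.disjoint_left]
    rintro ω (h1 | h1) h2 <;> simp only [Set.mem_ofPred_eq, abs_lt] at h1 h2 <;> omega
  · exact hS.measurableSet_setOf_stoppedWalk n (· = -k)
  · rw [Set.disjoint_left]
    rintro ω h1 h2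
    simp only [Set.mem_ofPred_eq, abs_lt] at h1 h2
    omega
  · exact hS.measurableSet_setOf_stoppedWalk n (· = k)

lemma measureReal_stoppedWalk_eq_threshold (hS : IsSignalSeq μ X p) (hp : p ∈ Set.Ioo 0 1)
    {k : ℕ} (hk : 0 < k) (n : ℕ) :
    μ.real {ω | stoppedWalk X k n ω = k} =
      p ^ k / (p ^ k + (1 - p) ^ k) * (1 - noCascadeProb μ X k n) := by
  have hsum := hS.noCascadeProb_add_measureReal_boundary (Int.natCast_pos.2 hk) n
  rw [hS.measureReal_stoppedWalk_eq_neg hp, zpow_natCast, div_pow] at hsum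
  have hp0 : p ^ k ≠ 0 := pow_ne_zero k hp.1.ne'
  have hD : p ^ k + (1 - p) ^ k ≠ 0 :=
    (add_pos (pow_pos hp.1 k) (pow_pos (sub_pos.2 hp.2) k)).ne'
  field_simp at hsum ⊢
  linear_combination hsum

lemma measureReal_choice_succ_eq_one (hS : IsSignalSeq μ X p) (hk : 0 < k) (n : ℕ) :
    μ.real {ω | choice X k (n + 1) ω = 1} =
      p * noCascadeProb μ X k n + μ.real {ω | stoppedWalk X k n ω = k} := by
  have hset : {ω | choice X k (n + 1) ω = 1} =
      ({ω | |stoppedWalk X k n ω| < k} ∩ {ω | X (n + 1) ω = 1}) ∪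
        {ω | stoppedWalk X k n ω = k} := by
    ext ω
    have h := abs_le.1 (abs_stoppedWalk_le hk.le (hS.sign · ω) n)
    simp only [choice, Nat.add_sub_cancel, Set.mem_union, Set.mem_inter_iff, Set.mem_ofPred_eq]
    split_ifs with hlt
    · have : stoppedWalk X k n ω ≠ k := by rw [abs_lt] at hlt; omega
      simp [hlt, this]
    · rw [Int.sign_eq_one_iff_pos, abs_lt] at *
      omega
  rw [hset, measureReal_union, hS.measureReal_stoppedWalk_inter_eq_one n (|·| < k),
    noCascadeProb]
  · rw [Set.disjoint_left]
    rintro ω ⟨h1, -⟩ h2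
    simp only [Set.mem_ofPred_eq, abs_lt] at h1 h2
    omega
  · exact hS.measurableSet_setOf_stoppedWalk n (· = k)

lemma integral_stoppedWalk_succ (hS : IsSignalSeq μ X p) (hk : 0 ≤ k) (n : ℕ) :
    ∫ ω, (stoppedWalk X k (n + 1) ω : ℝ) ∂μ =
      ∫ ω, (stoppedWalk X k n ω : ℝ) ∂μ + (2 * p - 1) * noCascadeProb μ X k n := by
  let A := {ω | |stoppedWalk X k n ω| < k}
  let U := A ∩ {ω | X (n + 1) ω = 1}
  let D := A ∩ {ω | X (n + 1) ω = -1}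
  have hstep : (fun ω => (stoppedWalk X k (n + 1) ω : ℝ)) =
      fun ω => (stoppedWalk X k n ω : ℝ) + (U.indicator 1 - D.indicator 1 : Ω → ℝ) ω := by
    ext ω
    rcases lt_or_ge |stoppedWalk X k n ω| k with h | h
    · have hA : ω ∈ A := h
      rw [stoppedWalk_succ_of_lt h]
      rcases hS.sign (n + 1) ω with hx | hx <;> simp [U, D, hA, hx]
    · have hA : ω ∉ A := h.not_gt
      simp [stoppedWalk_succ_of_le h, U, D, hA]
  have hint : Integrable (fun ω => (stoppedWalk X k n ω : ℝ)) μ := by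
    refine Integrable.of_bound (measurable_from_top.comp (hS.measurable_stoppedWalk n)
      |>.aestronglyMeasurable) k (ae_of_all _ fun ω => ?_)
    rw [Real.norm_eq_abs, ← Int.cast_abs]
    exact_mod_cast abs_stoppedWalk_le hk (hS.sign · ω) n
  have hA : MeasurableSet A := hS.measurableSet_setOf_stoppedWalk n (|·| < k)
  have hU : MeasurableSet U := hA.inter (hS.measurable _ (measurableSet_singleton _))
  have hD : MeasurableSet D := hA.inter (hS.measurable _ (measurableSet_singleton _))
  have hind {B : Set Ω} (hB : MeasurableSet B) : Integrable (B.indicator (1 : Ω → ℝ)) μ :=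
    (integrable_const 1).indicator hB
  rw [hstep, integral_add hint ((hind hU).sub (hind hD)), integral_sub' (hind hU) (hind hD),
    integral_indicator_one hU, integral_indicator_one hD,
    hS.measureReal_stoppedWalk_inter_eq_one n (|·| < k),
    hS.measureReal_stoppedWalk_inter_eq_neg_one n (|·| < k), noCascadeProb]
  ring

lemma integral_stoppedWalk (hS : IsSignalSeq μ X p) (hk : 0 ≤ k) (N : ℕ) :
    ∫ ω, (stoppedWalk X k N ω : ℝ) ∂μ =
      (2 * p - 1) * ∑ n ∈ Finset.range N, noCascadeProb μ X k n := by
  induction N with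
  | zero => simp [stoppedWalk]
  | succ N ih => rw [hS.integral_stoppedWalk_succ hk, ih, Finset.sum_range_succ]; ring

lemma sum_noCascadeProb_le (hS : IsSignalSeq μ X p) (hp : 1 / 2 < p) (hk : 0 ≤ k) (N : ℕ) :
    ∑ n ∈ Finset.range N, noCascadeProb μ X k n ≤ k / (2 * p - 1) := by
  rw [le_div_iff₀ (by linarith), mul_comm, ← hS.integral_stoppedWalk hk]
  have hbound : ∀ᵐ ω ∂μ, ‖(stoppedWalk X k N ω : ℝ)‖ ≤ k := ae_of_all _ fun ω => by
    rw [Real.norm_eq_abs, ← Int.cast_abs]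
    exact_mod_cast abs_stoppedWalk_le hk (hS.sign · ω) N
  simpa using (le_abs_self _).trans (norm_integral_le_of_norm_le_const hbound)

lemma sub_welfareN_eq (hS : IsSignalSeq μ X p) (hp : p ∈ Set.Ioo 0 1) {k : ℕ} (hk : 0 < k)
    {N : ℕ} (hN : N ≠ 0) :
    p ^ k / (p ^ k + (1 - p) ^ k) - welfareN μ X k N =
      (p ^ k / (p ^ k + (1 - p) ^ k) - p) * (∑ n ∈ Finset.range N, noCascadeProb μ X k n) /
        N := by
  have hchoice (n : ℕ) : μ.real {ω | choice X k (n + 1) ω = 1} =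
      p ^ k / (p ^ k + (1 - p) ^ k) -
        (p ^ k / (p ^ k + (1 - p) ^ k) - p) * noCascadeProb μ X k n := by
    rw [hS.measureReal_choice_succ_eq_one (Int.natCast_pos.2 hk),
      hS.measureReal_stoppedWalk_eq_threshold hp hk]
    ring
  have hshift (f : ℕ → ℝ) : ∑ n ∈ Finset.Icc 1 N, f n = ∑ n ∈ Finset.range N, f (n + 1) := by
    rw [Finset.range_eq_Ico, Finset.sum_Ico_add', zero_add, ← Finset.Ico_add_one_right_eq_Icc]
  rw [welfareN, integral_card_filter μ _ (fun n ω => choice X k n ω = 1)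
      fun n _ => hS.measurable_choice n (measurableSet_singleton 1), hshift]
  simp only [hchoice, Finset.sum_sub_distrib, Finset.sum_const, Finset.card_range, nsmul_eq_mul,
    ← Finset.mul_sum]
  field_simp
  ring

end IsSignalSeq

lemma lt_div_pow_add_pow {p : ℝ} (hp : p ∈ Set.Ioo (1 / 2 : ℝ) 1) {k : ℕ} (hk : 2 ≤ k) :
    p < p ^ k / (p ^ k + (1 - p) ^ k) := by
  obtain ⟨m, rfl⟩ : ∃ m, k = m + 2 := ⟨k - 2, by omega⟩
  have hq : 0 < 1 - p := sub_pos.2 hp.2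
  have hp0 : 0 < p := by linarith [hp.1]
  have hlt : (1 - p) ^ (m + 1) < p ^ (m + 1) :=
    pow_lt_pow_left₀ (by linarith [hp.1]) hq.le (Nat.succ_ne_zero m)
  rw [lt_div_iff₀ (by positivity)]
  have key : p ^ (m + 2) - p * (p ^ (m + 2) + (1 - p) ^ (m + 2)) =
      p * (1 - p) * (p ^ (m + 1) - (1 - p) ^ (m + 1)) := by ring
  nlinarith [mul_pos (mul_pos hp0 hq) (sub_pos.2 hlt)]

def toSign (z : ℤ) : ℤ := if z = 1 then 1 else -1

section Reduction

variable {Ω : Type*} [MeasurableSpace Ω] {μ : Measure Ω} {X : ℕ → Ω → ℤ} {p : ℝ}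

lemma welfareN_congr_ae {Y : ℕ → Ω → ℤ} (h : ∀ᵐ ω ∂μ, ∀ i, X i ω = Y i ω) (k : ℤ) (N : ℕ) :
    welfareN μ X k N = welfareN μ Y k N := by
  rw [welfareN, welfareN, integral_congr_ae]
  filter_upwards [h] with ω hω
  simp only [choice_congr hω]

lemma ae_eq_toSign [IsProbabilityMeasure μ] (hp : p ∈ Set.Icc 0 1) (hX : ∀ i, Measurable (X i))
    (hup : ∀ i, μ {ω | X i ω = 1} = ENNReal.ofReal p)
    (hdown : ∀ i, μ {ω | X i ω = -1} = ENNReal.ofReal (1 - p)) :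
    ∀ᵐ ω ∂μ, ∀ i, X i ω = toSign (X i ω) := by
  refine ae_all_iff.2 fun i => ?_
  have hU : MeasurableSet {ω | X i ω = 1} := hX i (measurableSet_singleton 1)
  have hD : MeasurableSet {ω | X i ω = -1} := hX i (measurableSet_singleton (-1))
  have hUD : μ ({ω | X i ω = 1} ∪ {ω | X i ω = -1}) = 1 := by
    rw [measure_union (Set.disjoint_left.2 fun ω h1 h2 => by simp_all) hD, hup, hdown,
      ← ENNReal.ofReal_add hp.1 (sub_nonneg.2 hp.2), add_sub_cancel, ENNReal.ofReal_one]
  filter_upwards [(ae_mem_iff_measure_eq (hU.union hD).nullMeasurableSet).2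
    (hUD.trans measure_univ.symm)] with ω hω
  rcases hω with (h : X i ω = 1) | (h : X i ω = -1) <;> simp [toSign, h]

lemma isSignalSeq_toSign (hp : 0 ≤ p) (hX : ∀ i, Measurable (X i)) (hindep : iIndepFun X μ)
    (hup : ∀ i, μ {ω | X i ω = 1} = ENNReal.ofReal p) :
    IsSignalSeq μ (fun i ω => toSign (X i ω)) p where
  measurable i := (measurable_from_top (f := toSign)).comp (hX i)
  indep := hindep.comp (fun _ => toSign) fun _ => measurable_from_top
  sign i ω := by unfold toSign; split_ifs <;> simp
  measureReal_eq_one i := by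
    have h : {ω | toSign (X i ω) = 1} = {ω | X i ω = 1} := by
      ext ω
      by_cases hx : X i ω = 1 <;> simp [toSign, hx]
    rw [h, measureReal_def, hup, ENNReal.toReal_ofReal hp]

end Reduction

/-- **Proposition 7(ii)** (rate of welfare convergence): with cascade threshold `k ≥ 2`,
`φ_k − W_N(k) = Θ(1/N)`, where `φ_k = p^k/(p^k + (1−p)^k)` is the infinite-population
equilibrium welfare. -/
theorem welfare_convergence_rate {Ω : Type*} [MeasurableSpace Ω] (μ : Measure Ω)
    [IsProbabilityMeasure μ] (p : ℝ) (hp : p ∈ Set.Ioo (1 / 2 : ℝ) 1)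
    (k : ℕ) (hk : 2 ≤ k)
    (X : ℕ → Ω → ℤ) (hX : ∀ i, Measurable (X i))
    (hindep : iIndepFun X μ)
    (hup : ∀ i, μ {ω | X i ω = 1} = ENNReal.ofReal p)
    (hdown : ∀ i, μ {ω | X i ω = -1} = ENNReal.ofReal (1 - p)) :
    ∃ a b : ℝ, ∃ N₀ : ℕ, 0 < a ∧ a ≤ b ∧ ∀ N : ℕ, N₀ ≤ N →
      a / N ≤ p ^ k / (p ^ k + (1 - p) ^ k) - welfareN μ X (k : ℤ) N ∧
      p ^ k / (p ^ k + (1 - p) ^ k) - welfareN μ X (k : ℤ) N ≤ b / N := by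
  set φ := p ^ k / (p ^ k + (1 - p) ^ k)
  have hp01 : p ∈ Set.Ioo 0 1 := ⟨by linarith [hp.1], hp.2⟩
  set Y : ℕ → Ω → ℤ := fun i ω => toSign (X i ω)
  have hS : IsSignalSeq μ Y p := isSignalSeq_toSign hp01.1.le hX hindep hup
  have hXY := welfareN_congr_ae (ae_eq_toSign (Set.Ioo_subset_Icc_self hp01) hX hup hdown) k
  have hgap : 0 < φ - p := sub_pos.2 (lt_div_pow_add_pow hp hk)
  have hk1 : (1 : ℝ) ≤ k / (2 * p - 1) := by
    rw [le_div_iff₀ (by linarith [hp.1])]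
    have : (2 : ℝ) ≤ k := by exact_mod_cast hk
    linarith [hp.2]
  refine ⟨φ - p, (φ - p) * (k / (2 * p - 1)), 1, hgap, le_mul_of_one_le_right hgap.le hk1,
    fun N hN => ?_⟩
  have hN0 : N ≠ 0 := Nat.one_le_iff_ne_zero.1 hN
  have hlow := one_le_sum_noCascadeProb μ Y (by omega : (0 : ℤ) < k) hN0
  have hhigh := hS.sum_noCascadeProb_le hp.1 (by omega : (0 : ℤ) ≤ k) N
  push_cast at hhigh
  rw [hXY, hS.sub_welfareN_eq hp01 (by omega) hN0]
  constructor
  · gcongr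
    exact le_mul_of_one_le_right hgap.le hlow
  · gcongr
end
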